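/- arXiv:2007.04642 — 10 statements merged into one kernel-verified Lean document; each statement's English description precedes it below -/
import Mathlib

section
/- Let G be a finite group and let R be a field such that either char(R) = 0 or char(R) = p where p does not divide the order of G. Let σ and τ be R-algebra endomorphisms of the group algebra RG that fix the center Z(RG) pointwise. Then every R-linear (σ,τ)-derivation of RG is (σ,τ)-inner (equivalently, H¹(RG, ₛRGₜ) = 0 for the twisted bimodule). -/
/-!
On group elements `δ` is a twisted cocycle, `d (g * h) = d g * τ h + σ g * d h`. Reindexing
`g ↦ h * g` shows that `S = ∑ g, d g * τ g⁻¹` satisfies `σ h * S = S * τ h - |G| • d h`, so when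
`|G|` is invertible, `x = |G|⁻¹ * S` makes `δ` inner on the basis `G` of `R[G]`, hence everywhere.
-/

open Finset

theorem natCast_ne_zero_of_forall_prime_not_dvd {R : Type*} [NonAssocRing R] [NoZeroDivisors R]
    [Nontrivial R] {n : ℕ} (hn : n ≠ 0) (h : ∀ p : ℕ, p.Prime → CharP R p → ¬ p ∣ n) :
    (n : R) ≠ 0 := by
  intro hzero
  have hdvd : ringChar R ∣ n := (ringChar.spec R n).mp hzero
  rcases CharP.char_is_prime_or_zero R (ringChar R) with hp | hp
  · exact h _ hp (ringChar.charP R) hdvd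
  · exact hn (Nat.eq_zero_of_zero_dvd (hp ▸ hdvd))

section TwistedCocycle

variable {A G : Type*} [Ring A] [Group G] [Fintype G] {σ τ : G →* A} {d : G → A}

theorem mul_sum_twistedCocycle (hd : ∀ g h, d (g * h) = d g * τ h + σ g * d h) (h : G) :
    σ h * ∑ g, d g * τ g⁻¹ = (∑ g, d g * τ g⁻¹) * τ h - Fintype.card G • d h := by
  have hterm : ∀ g, σ h * (d g * τ g⁻¹) = d (h * g) * τ (h * g)⁻¹ * τ h - d h := by
    intro g
    have hinv : τ g * τ g⁻¹ = 1 := by rw [← map_mul, mul_inv_cancel, map_one]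
    have hshift : τ (h * g)⁻¹ * τ h = τ g⁻¹ := by rw [← map_mul]; group
    calc σ h * (d g * τ g⁻¹) = (d (h * g) - d h * τ g) * τ g⁻¹ := by rw [hd]; noncomm_ring
      _ = d (h * g) * τ g⁻¹ - d h * (τ g * τ g⁻¹) := by noncomm_ring
      _ = d (h * g) * τ (h * g)⁻¹ * τ h - d h := by rw [hinv, mul_one, mul_assoc, hshift]
  rw [mul_sum, sum_congr rfl fun g _ ↦ hterm g, sum_sub_distrib, sum_const, card_univ, ← sum_mul]
  congr 2
  exact Equiv.sum_comp (Equiv.mulLeft h) fun g ↦ d g * τ g⁻¹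

theorem exists_eq_mul_sub_mul_of_twistedCocycle (hG : IsUnit (Fintype.card G : A))
    (hd : ∀ g h, d (g * h) = d g * τ h + σ g * d h) :
    ∃ x : A, ∀ g, d g = x * τ g - σ g * x := by
  obtain ⟨u, hu⟩ := hG
  have hcomm : ∀ a : A, Commute (↑u⁻¹ : A) a := fun a ↦ (hu ▸ Nat.cast_commute _ a).units_inv_left
  refine ⟨↑u⁻¹ * ∑ g, d g * τ g⁻¹, fun h ↦ ?_⟩
  rw [mul_assoc, ← mul_assoc (σ h), ← (hcomm (σ h)).eq, mul_assoc _ (σ h),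
    mul_sum_twistedCocycle hd, mul_sub, sub_sub_cancel, nsmul_eq_mul, ← hu,
    Units.inv_mul_cancel_left]

end TwistedCocycle

theorem twisted_derivation_inner_field_general {R G : Type*} [Field R] [Group G] [Fintype G]
    (hchar : ∀ p : ℕ, p.Prime → CharP R p → ¬ (p ∣ Fintype.card G))
    (σ τ : MonoidAlgebra R G →ₐ[R] MonoidAlgebra R G)
    (δ : MonoidAlgebra R G →ₗ[R] MonoidAlgebra R G)
    (hδ : ∀ a b : MonoidAlgebra R G, δ (a * b) = δ a * τ b + σ a * δ b) :
    ∃ x : MonoidAlgebra R G, ∀ a : MonoidAlgebra R G, δ a = x * τ a - σ a * x := by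
  have hn : (Fintype.card G : R) ≠ 0 :=
    natCast_ne_zero_of_forall_prime_not_dvd Fintype.card_ne_zero hchar
  have hG : IsUnit (Fintype.card G : MonoidAlgebra R G) := by
    simpa using (IsUnit.mk0 _ hn).map (algebraMap R (MonoidAlgebra R G))
  obtain ⟨x, hx⟩ := exists_eq_mul_sub_mul_of_twistedCocycle hG
    (σ := (σ : MonoidAlgebra R G →* MonoidAlgebra R G).comp (MonoidAlgebra.of R G))
    (τ := (τ : MonoidAlgebra R G →* MonoidAlgebra R G).comp (MonoidAlgebra.of R G))
    (d := fun g ↦ δ (MonoidAlgebra.of R G g)) fun g h ↦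
      (congrArg δ (map_mul _ g h)).trans (hδ _ _)
  have hinner : δ = LinearMap.mulLeft R x ∘ₗ τ.toLinearMap -
      LinearMap.mulRight R x ∘ₗ σ.toLinearMap :=
    (MonoidAlgebra.basis G R).ext hx
  exact ⟨x, fun a ↦ LinearMap.congr_fun hinner a⟩

/-- Let `G` be a finite group and `R` a field whose characteristic is either `0`
or a prime `p` not dividing `|G|`. If `σ, τ` are `R`-algebra endomorphisms of the group algebra
`R[G]` fixing the center of `R[G]` pointwise, then every `R`-linear `(σ,τ)`-derivation of `R[G]`
is `(σ,τ)`-inner. -/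
theorem twisted_derivation_inner_field {R G : Type*} [Field R] [Group G] [Fintype G]
    (hchar : ∀ p : ℕ, p.Prime → CharP R p → ¬ (p ∣ Fintype.card G))
    (σ τ : MonoidAlgebra R G →ₐ[R] MonoidAlgebra R G)
    (hσ : ∀ x ∈ Subring.center (MonoidAlgebra R G), σ x = x)
    (hτ : ∀ x ∈ Subring.center (MonoidAlgebra R G), τ x = x)
    (δ : MonoidAlgebra R G →ₗ[R] MonoidAlgebra R G)
    (hδ : ∀ a b : MonoidAlgebra R G, δ (a * b) = δ a * τ b + σ a * δ b) :
    ∃ x : MonoidAlgebra R G, ∀ a : MonoidAlgebra R G, δ a = x * τ a - σ a * x :=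
  twisted_derivation_inner_field_general hchar σ τ δ hδ
end

section
/- Let G be a finite group and let R be an integral domain with 1 which is not a field, such that either R has no additive torsion elements or, if R has p-torsion elements for a prime p, then p does not divide the order of G. Let σ and τ be the R-linear extensions to RG of group homomorphisms G → G, and suppose σ and τ fix the center Z(RG) pointwise. Then every R-linear (σ,τ)-derivation of RG is (σ,τ)-inner. -/
/-! With `n = |G|` and `x = ∑ g, δ(g) τ(g)⁻¹`, the twisted Leibniz rule gives
`σ(a) x = x τ(a) - n δ(a)`. Comparing coefficients, the coefficients of `x` are constant
modulo `n` along the twisted conjugacy classes `u ↦ s(h) u t(h)⁻¹`, so `x = n y + z` with `z`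
constant on these classes, which means `σ(a) z = z τ(a)`. Hence `n (y τ(a) - σ(a) y) = n δ(a)`,
and `n` can be cancelled because `R` has no `p`-torsion for the primes `p ∣ n`. -/

theorem isSMulRegular_nat_of_forall_prime_dvd {M : Type*} [AddMonoid M] {n : ℕ} (hn : n ≠ 0)
    (h : ∀ p : ℕ, p.Prime → p ∣ n → IsSMulRegular M p) : IsSMulRegular M n := by
  induction n using induction_on_primes with
  | zero => exact absurd rfl hn
  | one => exact IsSMulRegular.one M
  | prime_mul p a hp ih =>
    exact (h p hp (dvd_mul_right p a)).mul
      (ih (right_ne_zero_of_mul hn) fun q hq hqa => h q hq (hqa.mul_left p))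

section TwistedConjugacy

variable {G : Type*} [Group G] (s t : G →* G)

def twistedConjSetoid : Setoid G where
  r u v := ∃ h : G, s h * u * (t h)⁻¹ = v
  iseqv.refl u := ⟨1, by simp⟩
  iseqv.symm := by
    rintro u v ⟨h, rfl⟩
    exact ⟨h⁻¹, by simp [mul_assoc]⟩
  iseqv.trans := by
    rintro u v w ⟨h, rfl⟩ ⟨k, rfl⟩
    exact ⟨k * h, by simp [mul_assoc]⟩

noncomputable def twistedConjRep (u : G) : G := (Quotient.mk (twistedConjSetoid s t) u).out

theorem exists_twistedConj_twistedConjRep (u : G) :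
    ∃ h : G, s h * twistedConjRep s t u * (t h)⁻¹ = u :=
  Quotient.mk_out (s := twistedConjSetoid s t) u

theorem twistedConjRep_twistedConj (h u : G) :
    twistedConjRep s t (s h * u * (t h)⁻¹) = twistedConjRep s t u :=
  congrArg Quotient.out (Quotient.sound ((twistedConjSetoid s t).symm ⟨h, rfl⟩))

end TwistedConjugacy

theorem IsSMulRegular.monoidAlgebra {R M A : Type*} [Semiring R] [SMulZeroClass A R] {a : A}
    (ha : IsSMulRegular R a) : IsSMulRegular (MonoidAlgebra R M) a :=
  fun _ _ h => MonoidAlgebra.coeff_injective (ha.finsupp congr(MonoidAlgebra.coeff $h))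

namespace MonoidAlgebra

theorem mapDomainAlgHom_of {R M N : Type*} [CommSemiring R] [Monoid M] [Monoid N] (f : M →* N)
    (m : M) : mapDomainAlgHom R R f (of R M m) = of R N (f m) := by
  simp [of_apply]

variable {R G : Type*} [CommRing R] [Group G] (s t : G →* G)

theorem of_mul_eq_mul_of {z : MonoidAlgebra R G}
    (hz : ∀ h u, z.coeff (s h * u * (t h)⁻¹) = z.coeff u) (h : G) :
    of R G (s h) * z = z * of R G (t h) := by
  ext u
  simp only [of_apply, coeff_single_mul_apply, coeff_mul_single_apply, one_mul, mul_one]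
  simpa [mul_assoc] using hz h⁻¹ (u * (t h)⁻¹)

theorem mapDomainAlgHom_mul_eq_mul_mapDomainAlgHom {z : MonoidAlgebra R G}
    (hz : ∀ h u, z.coeff (s h * u * (t h)⁻¹) = z.coeff u) (a : MonoidAlgebra R G) :
    mapDomainAlgHom R R s a * z = z * mapDomainAlgHom R R t a := by
  induction a using induction_linear with
  | zero => simp
  | add a b ha hb => rw [map_add, map_add, add_mul, mul_add, ha, hb]
  | single g r =>
    rw [← smul_of, map_smul, map_smul, smul_mul_assoc, mul_smul_comm, mapDomainAlgHom_of,
      mapDomainAlgHom_of, of_mul_eq_mul_of s t hz]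

theorem exists_eq_smul_add_of_dvd_coeff_sub [Finite G] (r : R) {x : MonoidAlgebra R G}
    (hx : ∀ h u, r ∣ x.coeff (s h * u * (t h)⁻¹) - x.coeff u) :
    ∃ y z : MonoidAlgebra R G,
      x = r • y + z ∧ ∀ h u, z.coeff (s h * u * (t h)⁻¹) = z.coeff u := by
  have hrep : ∀ u, ∃ c, x.coeff u = x.coeff (twistedConjRep s t u) + r * c := fun u => by
    obtain ⟨h, hu⟩ := exists_twistedConj_twistedConjRep s t u
    obtain ⟨c, hc⟩ := hx h (twistedConjRep s t u)
    exact ⟨c, by rw [← hc, hu, add_sub_cancel]⟩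
  choose c hc using hrep
  let y : MonoidAlgebra R G := ofCoeff (Finsupp.equivFunOnFinite.symm c)
  have hz : ∀ v, (x - r • y).coeff v = x.coeff (twistedConjRep s t v) := fun v => by
    simp [y, coeff_sub, hc v]
  exact ⟨y, x - r • y, (add_sub_cancel _ _).symm, fun h u => by
    rw [hz, hz, twistedConjRep_twistedConj]⟩

section TwistedDerivation

variable [Fintype G] (δ : MonoidAlgebra R G →ₗ[R] MonoidAlgebra R G)

noncomputable def twistedSum : MonoidAlgebra R G := ∑ g, δ (of R G g) * of R G (t g)⁻¹

variable {s t δ}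
variable (hδ : ∀ a b : MonoidAlgebra R G,
  δ (a * b) = δ a * mapDomainAlgHom R R t b + mapDomainAlgHom R R s a * δ b)
include hδ

theorem of_mul_twistedSum (h : G) :
    of R G (s h) * twistedSum t δ
      = twistedSum t δ * of R G (t h) - Fintype.card G • δ (of R G h) := by
  have hleib : ∀ g,
      of R G (s h) * δ (of R G g) = δ (of R G (h * g)) - δ (of R G h) * of R G (t g) :=
    fun g => by rw [map_mul, hδ, mapDomainAlgHom_of, mapDomainAlgHom_of, add_sub_cancel_left]
  have hshift :
      ∑ g, δ (of R G (h * g)) * of R G (t g)⁻¹ = twistedSum t δ * of R G (t h) := by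
    rw [twistedSum, Finset.sum_mul]
    exact Fintype.sum_equiv (Equiv.mulLeft h) _ _ fun g => by simp [mul_assoc]
  calc of R G (s h) * twistedSum t δ
      = ∑ g, (δ (of R G (h * g)) * of R G (t g)⁻¹ - δ (of R G h)) := by
        rw [twistedSum, Finset.mul_sum]
        refine Finset.sum_congr rfl fun g _ => ?_
        rw [← mul_assoc, hleib, sub_mul, mul_assoc, ← map_mul, mul_inv_cancel, map_one, mul_one]
    _ = twistedSum t δ * of R G (t h) - Fintype.card G • δ (of R G h) := by
        rw [Finset.sum_sub_distrib, hshift, Finset.sum_const, Finset.card_univ]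

theorem mapDomainAlgHom_mul_twistedSum (a : MonoidAlgebra R G) :
    mapDomainAlgHom R R s a * twistedSum t δ
      = twistedSum t δ * mapDomainAlgHom R R t a - Fintype.card G • δ a := by
  induction a using induction_linear with
  | zero => simp
  | add a b ha hb =>
    rw [map_add, map_add, map_add, add_mul, mul_add, ha, hb, smul_add]
    abel
  | single g r =>
    rw [← smul_of, map_smul, map_smul, map_smul, smul_mul_assoc, mul_smul_comm,
      mapDomainAlgHom_of, mapDomainAlgHom_of, of_mul_twistedSum hδ, smul_sub, smul_comm _ r]

theorem card_dvd_coeff_twistedSum_sub (h u : G) :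
    (Fintype.card G : R) ∣
      (twistedSum t δ).coeff (s h * u * (t h)⁻¹) - (twistedSum t δ).coeff u := by
  refine ⟨(δ (of R G h)).coeff (s h * u), ?_⟩
  have := congrArg (fun x => x.coeff (s h * u)) (of_mul_twistedSum hδ h)
  simp only [of_apply, coeff_single_mul_apply, coeff_mul_single_apply, coeff_sub,
    Finsupp.sub_apply, coeff_smul_apply, inv_mul_cancel_left, one_mul, mul_one] at this ⊢
  rw [this, nsmul_eq_mul]
  ring

end TwistedDerivation

end MonoidAlgebra

theorem twisted_derivation_inner_domain_general {R G : Type*} [CommRing R] [Group G] [Fintype G]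
    (htor : ∀ p : ℕ, p.Prime → (∃ r : R, r ≠ 0 ∧ p • r = 0) → ¬ (p ∣ Fintype.card G))
    (s t : G →* G)
    (δ : MonoidAlgebra R G →ₗ[R] MonoidAlgebra R G)
    (hδ : ∀ a b : MonoidAlgebra R G,
      δ (a * b) = δ a * MonoidAlgebra.mapDomainAlgHom R R t b
        + MonoidAlgebra.mapDomainAlgHom R R s a * δ b) :
    ∃ x : MonoidAlgebra R G, ∀ a : MonoidAlgebra R G,
      δ a = x * MonoidAlgebra.mapDomainAlgHom R R t a
        - MonoidAlgebra.mapDomainAlgHom R R s a * x := by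
  have hreg : IsSMulRegular (MonoidAlgebra R G) (Fintype.card G) :=
    .monoidAlgebra <| isSMulRegular_nat_of_forall_prime_dvd Fintype.card_ne_zero fun p hp hdvd =>
      isSMulRegular_iff_right_eq_zero_of_smul.2 fun r hr =>
        by_contra fun hr0 => htor p hp ⟨r, hr0, hr⟩ hdvd
  obtain ⟨y, z, hx, hz⟩ := MonoidAlgebra.exists_eq_smul_add_of_dvd_coeff_sub s t _
    (MonoidAlgebra.card_dvd_coeff_twistedSum_sub hδ)
  refine ⟨y, fun a => hreg ?_⟩
  have key := MonoidAlgebra.mapDomainAlgHom_mul_twistedSum hδ a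
  rw [hx, mul_add, add_mul, MonoidAlgebra.mapDomainAlgHom_mul_eq_mul_mapDomainAlgHom s t hz,
    Nat.cast_smul_eq_nsmul] at key
  set n := Fintype.card G
  set σ := MonoidAlgebra.mapDomainAlgHom R R s
  set τ := MonoidAlgebra.mapDomainAlgHom R R t
  calc n • δ a = (n • y) * τ a + z * τ a - (σ a * (n • y) + z * τ a) := by rw [key]; abel
    _ = n • (y * τ a - σ a * y) := by rw [smul_sub, smul_mul_assoc, mul_smul_comm]; abel

/-- Let `G` be a finite group and `R` an integral domain with `1` which is not a
field, such that if `R` has `p`-torsion elements for a prime `p` then `p ∤ |G|`. If `σ, τ` are the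
`R`-linear extensions to `R[G]` of group homomorphisms `s, t : G → G` and they fix the center of
`R[G]` pointwise, then every `R`-linear `(σ,τ)`-derivation of `R[G]` is `(σ,τ)`-inner. -/
theorem twisted_derivation_inner_domain {R G : Type*} [CommRing R] [IsDomain R]
    (hnf : ¬ IsField R) [Group G] [Fintype G]
    (htor : ∀ p : ℕ, p.Prime → (∃ r : R, r ≠ 0 ∧ p • r = 0) → ¬ (p ∣ Fintype.card G))
    (s t : G →* G)
    (hσ : ∀ x ∈ Subring.center (MonoidAlgebra R G),
      MonoidAlgebra.mapDomainAlgHom R R s x = x)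
    (hτ : ∀ x ∈ Subring.center (MonoidAlgebra R G),
      MonoidAlgebra.mapDomainAlgHom R R t x = x)
    (δ : MonoidAlgebra R G →ₗ[R] MonoidAlgebra R G)
    (hδ : ∀ a b : MonoidAlgebra R G,
      δ (a * b) = δ a * MonoidAlgebra.mapDomainAlgHom R R t b
        + MonoidAlgebra.mapDomainAlgHom R R s a * δ b) :
    ∃ x : MonoidAlgebra R G, ∀ a : MonoidAlgebra R G,
      δ a = x * MonoidAlgebra.mapDomainAlgHom R R t a
        - MonoidAlgebra.mapDomainAlgHom R R s a * x :=
  twisted_derivation_inner_domain_general htor s t δ hδ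
end

section
/- Let A be a finite-dimensional central simple algebra with 1 over a field F, and let σ and τ be nonzero F-algebra endomorphisms of A. Then every F-linear (σ,τ)-derivation of A is (σ,τ)-inner (equivalently, H¹(A, ₛAₜ) = 0). -/
/-!
A finite-dimensional central simple algebra `A` is Azumaya: `A` is a simple `A ⊗ Aᵐᵒᵖ`-module
whose endomorphisms are the scalars `F`, so by the density theorem `a ⊗ b ↦ (x ↦ a x b)` maps
`A ⊗ Aᵐᵒᵖ` onto `End_F A`, and it is bijective by counting dimensions. Pulling back
`x ↦ φ(x) • 1` for a functional with `φ 1 = 1` gives a separability idempotent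
`e = ∑ xᵢ ⊗ yᵢ`: `∑ a xᵢ ⊗ yᵢ = ∑ xᵢ ⊗ yᵢ a` for all `a`, and `∑ xᵢ yᵢ = 1`.
Applying `x ⊗ y ↦ σ(x) δ(y)` to the first identity and expanding with the twisted Leibniz rule
gives `σ(a) w = w τ(a) + δ(a)` for `w = ∑ σ(xᵢ) δ(yᵢ)`, so `δ` is inner, implemented by `-w`.
-/

open TensorProduct MulOpposite

section Density

variable {F R M : Type*} [Field F] [Ring R] [AddCommGroup M] [Module R M] [Module F M]

theorem LinearMap.eq_zero_of_apply_basis_eq_zero {ι : Type*} [Fintype ι] [DecidableEq ι]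
    (b : Module.Basis ι F M) (hM : ∀ f : M →ₗ[R] M, ∃ c : F, ∀ x, f x = c • x)
    (φ : (ι → M) →ₗ[R] M) (hφ : φ b = 0) : φ = 0 := by
  choose c hc using fun j => hM (φ ∘ₗ LinearMap.single R (fun _ => M) j)
  have hφ_apply : ∀ x : ι → M, φ x = ∑ j, c j • x j := fun x => by
    conv_lhs => rw [← Finset.univ_sum_single x]
    simp only [map_sum]
    exact Finset.sum_congr rfl fun j _ => hc j (x j)
  have hc_zero : c = 0 := funext <| Fintype.linearIndependent_iff.mp b.linearIndependent c
    (by rw [← hφ_apply, hφ])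
  ext x
  simp [hφ_apply, hc_zero]

theorem Algebra.lsmul_surjective_of_forall_eq_smul [Algebra F R] [IsScalarTower F R M]
    [FiniteDimensional F M] [IsSemisimpleModule R M]
    (hM : ∀ f : M →ₗ[R] M, ∃ c : F, ∀ x, f x = c • x) :
    Function.Surjective (Algebra.lsmul F F M : R →ₐ[F] Module.End F M) := by
  let b := Module.finBasis F M
  obtain ⟨W, hW⟩ := exists_isCompl (Submodule.span R {(b : Fin _ → M)})
  have hπ : W.projection _ hW.symm = 0 := by
    refine LinearMap.ext fun x => funext fun i => ?_
    have := LinearMap.eq_zero_of_apply_basis_eq_zero b hM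
      (LinearMap.proj i ∘ₗ W.projection _ hW.symm) (by
        simp [Submodule.projection_apply_of_mem_right hW.symm
          (Submodule.mem_span_singleton_self _)])
    exact LinearMap.congr_fun this x
  have hW_bot : W = ⊥ := by
    rw [← Submodule.range_projection hW.symm, hπ, LinearMap.range_zero]
  have hspan : Submodule.span R {(b : Fin _ → M)} = ⊤ := by
    simpa [hW_bot] using hW.sup_eq_top
  intro g
  obtain ⟨r, hr⟩ := Submodule.mem_span_singleton.mp (hspan ▸ Submodule.mem_top (x := g ∘ b))
  exact ⟨r, b.ext fun i => congr_fun hr i⟩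

end Density

section Bimodule

attribute [local instance] TensorProduct.Algebra.module

variable {F A : Type*} [CommRing F] [Ring A] [Algebra F A]

@[simp]
theorem TensorProduct.Algebra.tmul_one_smul (a x : A) : (a ⊗ₜ[F] (1 : Aᵐᵒᵖ)) • x = a * x := by
  rw [TensorProduct.Algebra.smul_def, one_smul, smul_eq_mul]

@[simp]
theorem TensorProduct.Algebra.one_tmul_op_smul (b x : A) : ((1 : A) ⊗ₜ[F] op b) • x = x * b := by
  rw [TensorProduct.Algebra.smul_def, one_smul, op_smul_eq_mul]

instance : IsScalarTower F (A ⊗[F] Aᵐᵒᵖ) A where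
  smul_assoc r t x := by
    change TensorProduct.Algebra.moduleAux _ _ = r • TensorProduct.Algebra.moduleAux _ _
    simp

theorem isSimpleModule_tensorProduct_mulOpposite [IsSimpleRing A] :
    IsSimpleModule (A ⊗[F] Aᵐᵒᵖ) A := by
  refine (isSimpleModule_iff _ _).mpr ⟨fun p => or_iff_not_imp_left.mpr fun hp => ?_⟩
  obtain ⟨x, hxp, hx⟩ := p.ne_bot_iff.mp hp
  let I : TwoSidedIdeal A := .mk' p p.zero_mem p.add_mem p.neg_mem
    (fun {a _} hb => by simpa using p.smul_mem (a ⊗ₜ 1) hb)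
    (fun {_ b} ha => by simpa using p.smul_mem (1 ⊗ₜ op b) ha)
  have h1 : (1 : A) ∈ p := (TwoSidedIdeal.mem_mk' ..).mp <|
    IsSimpleRing.one_mem_of_ne_zero_mem I hx ((TwoSidedIdeal.mem_mk' ..).mpr hxp)
  exact eq_top_iff.mpr fun y _ => by simpa using p.smul_mem (y ⊗ₜ 1) h1

theorem exists_eq_smul_of_linearMap_tensorProduct_mulOpposite [Algebra.IsCentral F A]
    (f : A →ₗ[A ⊗[F] Aᵐᵒᵖ] A) : ∃ c : F, ∀ x, f x = c • x := by
  have hleft : ∀ x, f x = x * f 1 := fun x => by simpa using f.map_smul (x ⊗ₜ 1) 1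
  have hright : ∀ x, f x = f 1 * x := fun x => by simpa using f.map_smul (1 ⊗ₜ op x) 1
  obtain ⟨c, hc⟩ := (Algebra.IsCentral.mem_center_iff F).mp <|
    Subalgebra.mem_center_iff.mpr fun b => by rw [← hleft, ← hright]
  exact ⟨c, fun x => by rw [hright, hc, Algebra.smul_def]⟩

instance IsAzumaya.of_isCentral_of_isSimpleRing {F A : Type*} [Field F] [Ring A] [Algebra F A]
    [FiniteDimensional F A] [IsSimpleRing A] [Algebra.IsCentral F A] : IsAzumaya F A where
  bij := by
    have := isSimpleModule_tensorProduct_mulOpposite (F := F) (A := A)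
    have hsurj : Function.Surjective (AlgHom.mulLeftRight F A) :=
      Algebra.lsmul_surjective_of_forall_eq_smul
        exists_eq_smul_of_linearMap_tensorProduct_mulOpposite
    refine ⟨(LinearMap.injective_iff_surjective_of_finrank_eq_finrank
      (f := (AlgHom.mulLeftRight F A).toLinearMap) ?_).mpr hsurj, hsurj⟩
    rw [Module.finrank_tensorProduct, Module.finrank_linearMap, MulOpposite.finrank]

end Bimodule

section Separable

variable {F A : Type*} [CommRing F] [Ring A] [Algebra F A]

def IsSeparabilityIdempotent (e : A ⊗[F] Aᵐᵒᵖ) : Prop :=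
  (∀ a : A, (a ⊗ₜ 1) * e = (1 ⊗ₜ op a) * e) ∧ AlgHom.mulLeftRight F A e 1 = 1

variable (σ τ : A →ₐ[F] A) (δ : A →ₗ[F] A)

def twistedPairing : A ⊗[F] Aᵐᵒᵖ →ₗ[F] A :=
  TensorProduct.lift <|
    (LinearMap.mul F A ∘ₗ σ.toLinearMap).compl₂ (δ ∘ₗ (opLinearEquiv F).symm.toLinearMap)

@[simp]
theorem twistedPairing_tmul (x : A) (y : Aᵐᵒᵖ) :
    twistedPairing σ δ (x ⊗ₜ y) = σ x * δ y.unop :=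
  rfl

theorem twistedPairing_tmul_one_mul (a : A) (t : A ⊗[F] Aᵐᵒᵖ) :
    twistedPairing σ δ ((a ⊗ₜ 1) * t) = σ a * twistedPairing σ δ t := by
  induction t using TensorProduct.induction_on with
  | zero => simp
  | tmul x y => simp [mul_assoc]
  | add s t hs ht => simp [mul_add, hs, ht]

theorem twistedPairing_one_tmul_op_mul (hδ : ∀ a b : A, δ (a * b) = δ a * τ b + σ a * δ b)
    (a : A) (t : A ⊗[F] Aᵐᵒᵖ) :
    twistedPairing σ δ ((1 ⊗ₜ op a) * t) =
      twistedPairing σ δ t * τ a + σ (AlgHom.mulLeftRight F A t 1) * δ a := by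
  induction t using TensorProduct.induction_on with
  | zero => simp
  | tmul x y => simp [hδ, mul_add, mul_assoc]
  | add s t hs ht => simp only [mul_add, map_add, hs, ht, LinearMap.add_apply, add_mul]; abel

theorem exists_eq_mul_sub_mul_of_isSeparabilityIdempotent {e : A ⊗[F] Aᵐᵒᵖ}
    (he : IsSeparabilityIdempotent e) (hδ : ∀ a b : A, δ (a * b) = δ a * τ b + σ a * δ b) :
    ∃ x : A, ∀ a : A, δ a = x * τ a - σ a * x := by
  refine ⟨-twistedPairing σ δ e, fun a => ?_⟩
  have key := congrArg (twistedPairing σ δ) (he.1 a)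
  rw [twistedPairing_tmul_one_mul, twistedPairing_one_tmul_op_mul σ τ δ hδ, he.2, map_one,
    one_mul] at key
  rw [neg_mul, mul_neg, sub_neg_eq_add, key, neg_add_cancel_left]

end Separable

theorem IsAzumaya.exists_isSeparabilityIdempotent {F A : Type*} [Field F] [Ring A]
    [Algebra F A] [Nontrivial A] [IsAzumaya F A] :
    ∃ e : A ⊗[F] Aᵐᵒᵖ, IsSeparabilityIdempotent e := by
  obtain ⟨φ, hφ⟩ := Module.Projective.exists_dual_eq_one F (one_ne_zero : (1 : A) ≠ 0)
  obtain ⟨e, he⟩ := IsAzumaya.bij.2 (Algebra.linearMap F A ∘ₗ φ)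
  refine ⟨e, fun a => IsAzumaya.bij.1 ?_, by simp [he, hφ]⟩
  ext x
  simp [he, Algebra.commutes]

/-- Let `A` be a finite-dimensional central simple algebra with `1` over a field
`F` and let `σ, τ` be (nonzero, i.e. unital) `F`-algebra endomorphisms of `A`. Then every
`F`-linear `(σ,τ)`-derivation of `A` is `(σ,τ)`-inner. -/
theorem twisted_derivation_inner_csa {F A : Type*} [Field F] [Ring A] [Algebra F A]
    [FiniteDimensional F A] [Algebra.IsCentral F A] [IsSimpleRing A]
    (σ τ : A →ₐ[F] A)
    (δ : A →ₗ[F] A)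
    (hδ : ∀ a b : A, δ (a * b) = δ a * τ b + σ a * δ b) :
    ∃ x : A, ∀ a : A, δ a = x * τ a - σ a * x := by
  obtain ⟨e, he⟩ := IsAzumaya.exists_isSeparabilityIdempotent (F := F) (A := A)
  exact exists_eq_mul_sub_mul_of_isSeparabilityIdempotent σ τ δ he hδ
end

section
/- Let A be a unique factorization domain and let σ and τ be two distinct ring endomorphisms of A. Then there exists g ∈ A which is a greatest common divisor of the set {τ(x) − σ(x) : x ∈ A} (i.e., g divides τ(x) − σ(x) for every x ∈ A, and every common divisor of all τ(x) − σ(x) divides g), the map Δ : A → A uniquely determined by g·Δ(x) = τ(x) − σ(x) for all x ∈ A is a (σ,τ)-derivation, and the A-module of all (σ,τ)-derivations of A is free of rank one generated by Δ: for every (σ,τ)-derivation δ of A there exists a unique a ∈ A such that δ(x) = a·Δ(x) for all x ∈ A (equivalently, g·δ(x) = a·(τ(x) − σ(x)) for all x ∈ A). -/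
/-!
Because `A` is commutative, expanding `δ (x * y) = δ (y * x)` gives
`δ x * (τ y - σ y) = δ y * (τ x - σ x)`: every `(σ,τ)`-derivation is proportional to `τ - σ`,
hence to `Δ = (τ - σ) / g`. Dividing by the gcd `g` leaves `Δ` without common non-unit divisors,
and in a GCD domain a family proportional to such a family is a multiple of it. The gcd `g` of
the infinite family `τ x - σ x` exists because divisibility in a UFD is well-founded.
-/

structure IsTwistedDerivation {A : Type*} [Ring A] (σ τ : A →+* A) (δ : A → A) : Prop where
  map_add : ∀ x y, δ (x + y) = δ x + δ y
  map_mul : ∀ x y, δ (x * y) = δ x * τ y + σ x * δ y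

theorem isTwistedDerivation_sub {A : Type*} [Ring A] (σ τ : A →+* A) :
    IsTwistedDerivation σ τ fun x => τ x - σ x where
  map_add x y := by simp only [map_add]; abel
  map_mul x y := by simp only [map_mul]; noncomm_ring

namespace IsTwistedDerivation

variable {A : Type*} [CommRing A] {σ τ : A →+* A} {δ : A → A}

theorem apply_mul_sub_comm (hδ : IsTwistedDerivation σ τ δ) (x y : A) :
    δ x * (τ y - σ y) = δ y * (τ x - σ x) := by
  have h := hδ.map_mul x y
  rw [mul_comm x y, hδ.map_mul] at h
  linear_combination -h

theorem of_mul_eq [IsDomain A] {g : A} {Δ : A → A} (hδ : IsTwistedDerivation σ τ δ) (hg : g ≠ 0)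
    (hΔ : ∀ x, g * Δ x = δ x) : IsTwistedDerivation σ τ Δ where
  map_add x y := mul_left_cancel₀ hg <| by
    rw [mul_add, hΔ, hΔ, hΔ, hδ.map_add]
  map_mul x y := mul_left_cancel₀ hg <| by
    rw [hΔ, hδ.map_mul, ← hΔ x, ← hΔ y]
    ring

end IsTwistedDerivation

section GCD

variable {α ι : Type*} [CommMonoidWithZero α] [GCDMonoid α]

theorem exists_gcd_of_ne_zero [WfDvdMonoid α] {f : ι → α} {i₀ : ι} (hi₀ : f i₀ ≠ 0) :
    ∃ g, (∀ i, g ∣ f i) ∧ ∀ d, (∀ i, d ∣ f i) → d ∣ g := by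
  -- a common divisor `d` of `f` with `f i₀ / d` minimal for divisibility
  obtain ⟨c, ⟨d, hd, hdc⟩, hmin⟩ := wellFounded_dvdNotUnit.has_min
    {c | ∃ d, (∀ i, d ∣ f i) ∧ f i₀ = d * c} ⟨f i₀, 1, fun _ => one_dvd _, (one_mul _).symm⟩
  refine ⟨d, hd, fun e he => ?_⟩
  have hl : ∀ i, lcm d e ∣ f i := fun i => lcm_dvd (hd i) (he i)
  obtain ⟨c', hc'⟩ := hl i₀
  obtain ⟨k, hk⟩ := dvd_lcm_left d e
  have hd0 : d ≠ 0 := left_ne_zero_of_mul (hdc ▸ hi₀)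
  have hc : c = c' * k := mul_left_cancel₀ hd0 <| by rw [← hdc, hc', hk, mul_assoc, mul_comm k]
  have hk_unit : IsUnit k := by
    by_contra hk_unit
    exact hmin c' ⟨lcm d e, hl, hc'⟩ ⟨right_ne_zero_of_mul (hc' ▸ hi₀), k, hk_unit, hc⟩
  exact hk_unit.dvd_mul_right.mp (hk ▸ dvd_lcm_right d e)

theorem exists_eq_mul_of_mul_eq_mul_comm {f h : ι → α} {i₀ : ι} (hi₀ : h i₀ ≠ 0)
    (hfh : ∀ i j, f i * h j = f j * h i) (hh : ∀ q, (∀ i, q ∣ h i) → IsUnit q) :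
    ∃ a, ∀ i, f i = a * h i := by
  -- `p / q` is `f i₀ / h i₀` in lowest terms, so `q` divides every `h i`
  obtain ⟨p, q, hp, hq, hpq⟩ := extract_gcd (f i₀) (h i₀)
  have hc : gcd (f i₀) (h i₀) ≠ 0 := left_ne_zero_of_mul (hq ▸ hi₀)
  have hrel : ∀ i, q * f i = p * h i := fun i => mul_left_cancel₀ hc <| by
    rw [← mul_assoc, ← mul_assoc, ← hp, ← hq, mul_comm, hfh, mul_comm]
  obtain ⟨u, rfl⟩ := hh q fun i =>
    (gcd_isUnit_iff_isRelPrime.mp hpq).symm.dvd_of_dvd_mul_left ⟨f i, (hrel i).symm⟩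
  exact ⟨↑u⁻¹ * p, fun i => by rw [mul_assoc, Units.eq_inv_mul_iff_mul_eq, hrel]⟩

end GCD

theorem IsTwistedDerivation.existsUnique_eq_mul {A : Type*} [CommRing A] [IsDomain A]
    [GCDMonoid A] {σ τ : A →+* A} {δ Δ : A → A} {g x₀ : A} (hδ : IsTwistedDerivation σ τ δ)
    (hgcd : ∀ d, (∀ x, d ∣ τ x - σ x) → d ∣ g) (hΔ : ∀ x, g * Δ x = τ x - σ x)
    (hx₀ : τ x₀ - σ x₀ ≠ 0) : ∃! a, ∀ x, δ x = a * Δ x := by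
  have hg : g ≠ 0 := left_ne_zero_of_mul ((hΔ x₀).symm ▸ hx₀)
  have hΔx₀ : Δ x₀ ≠ 0 := right_ne_zero_of_mul ((hΔ x₀).symm ▸ hx₀)
  have hδΔ : ∀ x y, δ x * Δ y = δ y * Δ x := fun x y => mul_left_cancel₀ hg <| by
    linear_combination hδ.apply_mul_sub_comm x y + δ x * hΔ y - δ y * hΔ x
  have hΔ_unit : ∀ q, (∀ x, q ∣ Δ x) → IsUnit q := fun q hq => by
    have : g * q ∣ g * 1 := (mul_one g).symm ▸ hgcd _ fun x => hΔ x ▸ mul_dvd_mul_left g (hq x)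
    exact isUnit_of_dvd_one ((mul_dvd_mul_iff_left hg).mp this)
  obtain ⟨a, ha⟩ := exists_eq_mul_of_mul_eq_mul_comm hΔx₀ hδΔ hΔ_unit
  exact ⟨a, ha, fun b hb => mul_right_cancel₀ hΔx₀ ((hb x₀).symm.trans (ha x₀))⟩

/-- Hartwig–Larsson–Silvestrov. Let `A` be a UFD and `σ ≠ τ` two ring
endomorphisms of `A`. Then there is `g ∈ A` which is a gcd of `{τ(x) − σ(x) : x ∈ A}`, the map
`Δ` determined by `g·Δ(x) = τ(x) − σ(x)` is a `(σ,τ)`-derivation, and the `A`-module of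
`(σ,τ)`-derivations of `A` is free of rank one generated by `Δ`. -/
theorem twisted_derivations_free_rank_one_ufd {A : Type*} [CommRing A] [IsDomain A]
    [UniqueFactorizationMonoid A]
    (σ τ : A →+* A) (hστ : σ ≠ τ) :
    ∃ (g : A) (Δ : A → A),
      (∀ x : A, g ∣ τ x - σ x) ∧
      (∀ d : A, (∀ x : A, d ∣ τ x - σ x) → d ∣ g) ∧
      (∀ x : A, g * Δ x = τ x - σ x) ∧
      (∀ x y : A, Δ (x + y) = Δ x + Δ y) ∧
      (∀ x y : A, Δ (x * y) = Δ x * τ y + σ x * Δ y) ∧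
      ∀ δ : A → A,
        (∀ x y : A, δ (x + y) = δ x + δ y) →
        (∀ x y : A, δ (x * y) = δ x * τ y + σ x * δ y) →
        ∃! a : A, ∀ x : A, δ x = a * Δ x := by
  let := UniqueFactorizationMonoid.toGCDMonoid A
  obtain ⟨x₀, hx₀⟩ : ∃ x, τ x - σ x ≠ 0 := by
    by_contra! h
    exact hστ (RingHom.ext fun x => (sub_eq_zero.mp (h x)).symm)
  obtain ⟨g, hg_dvd, hgcd⟩ := exists_gcd_of_ne_zero (f := fun x => τ x - σ x) hx₀
  choose Δ hΔ using hg_dvd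
  have hΔ' : ∀ x, g * Δ x = τ x - σ x := fun x => (hΔ x).symm
  have hg : g ≠ 0 := left_ne_zero_of_mul (hΔ' x₀ ▸ hx₀)
  have hΔ_der := (isTwistedDerivation_sub σ τ).of_mul_eq hg hΔ'
  exact ⟨g, Δ, fun x => ⟨Δ x, hΔ x⟩, hgcd, hΔ', hΔ_der.map_add, hΔ_der.map_mul,
    fun δ hadd hmul => IsTwistedDerivation.existsUnique_eq_mul ⟨hadd, hmul⟩ hgcd hΔ' hx₀⟩
end

section
/- Let R and T be rings with 1, let ι : R → T be an injective unital ring homomorphism mapping the center Z(R) into the center Z(T), and let G be a group. Let σ and τ be R-linear ring endomorphisms of the group ring RG fixing the center Z(RG) pointwise, and let δ be an R-linear (σ,τ)-derivation of RG. Then there exist T-linear ring endomorphisms σ_T and τ_T of TG fixing Z(TG) pointwise with σ_T ∘ ι̂ = ι̂ ∘ σ and τ_T ∘ ι̂ = ι̂ ∘ τ, and a T-linear (σ_T,τ_T)-derivation δ_T of TG with δ_T ∘ ι̂ = ι̂ ∘ δ, where ι̂ : RG → TG is the coefficientwise map induced by ι. -/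
/-!
Every map is extended by `∑ t_g g ↦ ∑ t_g ι(φ g)`. Scalar linearity of `φ` makes each `φ g` commute
with the scalars of `R[G]`, i.e. have central coefficients; since `ι` preserves centres, `ι(φ g)`
commutes with the scalars of `T[G]`. This is what makes the extensions `T`-linear and the
extensions of `σ, τ` multiplicative, and lets the twisted Leibniz rule be checked on monomials.
A central element of `T[G]` has coefficients constant on conjugacy classes, so it is a
`T`-combination of images of central elements of `R[G]` (the sums over the level sets of its
coefficient function), and these are fixed by `σ` and `τ`.
-/

open MonoidAlgebra

namespace MonoidAlgebra

section Scalars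

variable {k G : Type*} [Ring k] [Monoid G]

def IsScalarLinear (f : k[G] → k[G]) : Prop :=
  ∀ (r : k) (x : k[G]),
    f (single 1 r * x) = single 1 r * f x ∧ f (x * single 1 r) = f x * single 1 r

theorem mem_centralizer_range_single_one_iff {x : k[G]} :
    x ∈ Set.centralizer (Set.range (single 1 : k → k[G])) ↔ ∀ g, x.coeff g ∈ Subring.center k := by
  simp only [Set.mem_centralizer_iff, Set.forall_mem_range, Subring.mem_center_iff]
  constructor
  · intro h g r
    simpa [coeff_single_one_mul, coeff_mul_single_one] using congr(($(h r)).coeff g)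
  · intro h r
    ext g
    simp [coeff_single_one_mul, coeff_mul_single_one, h g r]

theorem single_one_mem_centralizer_range_single_one (g : G) :
    single g (1 : k) ∈ Set.centralizer (Set.range (single 1 : k → k[G])) := by
  rintro _ ⟨r, rfl⟩
  exact single_commute_single (Commute.one_left g) (Commute.one_right r)

theorem IsScalarLinear.map_mem_centralizer {f : k[G] → k[G]} (hf : IsScalarLinear f) {x : k[G]}
    (hx : x ∈ Set.centralizer (Set.range (single 1 : k → k[G]))) :
    f x ∈ Set.centralizer (Set.range (single 1 : k → k[G])) := by
  rintro _ ⟨r, rfl⟩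
  rw [← (hf r x).1, ← (hf r x).2, hx _ ⟨r, rfl⟩]

end Scalars

section Center

variable {k G : Type*} [Ring k] [Group G]

theorem coeff_conj_of_mem_center {x : k[G]} (hx : x ∈ Subring.center k[G]) (h g : G) :
    x.coeff (h * g * h⁻¹) = x.coeff g := by
  have := congr(($(Subring.mem_center_iff.mp hx (single h 1))).coeff (h * g))
  rwa [coeff_single_mul_apply, coeff_mul_single_apply, one_mul, mul_one, inv_mul_cancel_left,
    eq_comm] at this

theorem sum_single_one_mem_center {S : Finset G} (hS : ∀ h g, g ∈ S → h * g * h⁻¹ ∈ S) :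
    ∑ g ∈ S, single g (1 : k) ∈ Subring.center k[G] := by
  rw [Subring.mem_center_iff]
  intro y
  induction y using induction_linear with
  | zero => rw [zero_mul, mul_zero]
  | add a b ha hb => rw [add_mul, mul_add, ha, hb]
  | single h r =>
    simp only [Finset.mul_sum, Finset.sum_mul, single_mul_single, mul_one, one_mul]
    refine Finset.sum_nbij' (fun g => h * g * h⁻¹) (fun g => h⁻¹ * g * h) (hS h)
      (fun g hg => by simpa using hS h⁻¹ g hg) (fun g _ => by group) (fun g _ => by group)
      (fun g _ => by rw [inv_mul_cancel_right])

end Center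

section Fibers

variable {k G : Type*} [Semiring k] [Monoid G] [DecidableEq k]

theorem eq_sum_single_one_mul_sum_fiber (x : k[G]) :
    x = ∑ t ∈ x.coeff.support.image x.coeff,
      single 1 t * ∑ g ∈ x.coeff.support.filter (x.coeff · = t), single g 1 := by
  calc x = ∑ g ∈ x.coeff.support, single g (x.coeff g) := (sum_coeff_single x).symm
    _ = ∑ t ∈ x.coeff.support.image x.coeff,
          ∑ g ∈ x.coeff.support.filter (x.coeff · = t), single g (x.coeff g) :=
        (Finset.sum_fiberwise_of_maps_to (fun g hg => Finset.mem_image_of_mem _ hg) _).symm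
    _ = _ := by
        refine Finset.sum_congr rfl fun t _ => ?_
        rw [Finset.mul_sum]
        refine Finset.sum_congr rfl fun g hg => ?_
        rw [single_mul_single, one_mul, mul_one, (Finset.mem_filter.mp hg).2]

end Fibers

theorem leibniz_of_single {k G A : Type*} [Semiring k] [Monoid G] [Semiring A]
    (δ σ τ : k[G] →+ A)
    (h : ∀ (g g' : G) (t t' : k), δ (single g t * single g' t') =
      δ (single g t) * τ (single g' t') + σ (single g t) * δ (single g' t'))
    (a b : k[G]) : δ (a * b) = δ a * τ b + σ a * δ b := by
  induction a using induction_linear with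
  | zero => simp
  | add a₁ a₂ h₁ h₂ => simp only [add_mul, map_add, h₁, h₂, add_add_add_comm]
  | single g t =>
    induction b using induction_linear with
    | zero => simp
    | add b₁ b₂ h₁ h₂ => simp only [mul_add, map_add, h₁, h₂, add_add_add_comm]
    | single g' t' => exact h g g' t t'

section Extension

variable {R T G : Type*} [Ring R] [Ring T] [Monoid G] {ι : R →+* T}

theorem mapRingHom_mem_centralizer_range_single_one
    (hcen : ∀ r ∈ Subring.center R, ι r ∈ Subring.center T) {x : R[G]}
    (hx : x ∈ Set.centralizer (Set.range (single 1 : R → R[G]))) :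
    mapRingHom G ι x ∈ Set.centralizer (Set.range (single 1 : T → T[G])) := by
  rw [mem_centralizer_range_single_one_iff] at hx ⊢
  intro g
  rw [coeff_mapRingHom]
  exact hcen _ (hx g)

theorem commute_single_one_mapRingHom (hcen : ∀ r ∈ Subring.center R, ι r ∈ Subring.center T)
    {φ : R[G] → R[G]} (hφ : IsScalarLinear φ) (g : G) (t : T) :
    Commute (single 1 t) (mapRingHom G ι (φ (single g 1))) :=
  mapRingHom_mem_centralizer_range_single_one hcen
    (hφ.map_mem_centralizer (single_one_mem_centralizer_range_single_one g)) _ ⟨t, rfl⟩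

variable (ι) in
noncomputable def extendAlong (φ : R[G] →+ R[G]) : T[G] →+ T[G] :=
  liftNC (singleAddHom 1) fun g => mapRingHom G ι (φ (single g 1))

theorem extendAlong_single (φ : R[G] →+ R[G]) (g : G) (t : T) :
    extendAlong ι φ (single g t) = single 1 t * mapRingHom G ι (φ (single g 1)) :=
  liftNC_single _ _ _ _

theorem extendAlong_single_one_mul (φ : R[G] →+ R[G]) (t : T) (x : T[G]) :
    extendAlong ι φ (single 1 t * x) = single 1 t * extendAlong ι φ x := by
  induction x using induction_linear with
  | zero => simp
  | add a b ha hb => rw [mul_add, map_add, ha, hb, map_add, mul_add]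
  | single g s =>
    rw [single_mul_single, one_mul, extendAlong_single, extendAlong_single, ← mul_assoc,
      single_mul_single, one_mul]

theorem extendAlong_mul_single_one (hcen : ∀ r ∈ Subring.center R, ι r ∈ Subring.center T)
    {φ : R[G] →+ R[G]} (hφ : IsScalarLinear φ) (t : T) (x : T[G]) :
    extendAlong ι φ (x * single 1 t) = extendAlong ι φ x * single 1 t := by
  induction x using induction_linear with
  | zero => simp
  | add a b ha hb => rw [add_mul, map_add, ha, hb, map_add, add_mul]
  | single g s =>
    rw [single_mul_single, mul_one, extendAlong_single, extendAlong_single, ← mul_one (1 : G),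
      ← single_mul_single, mul_one, mul_assoc, (commute_single_one_mapRingHom hcen hφ g t).eq,
      mul_assoc]

theorem isScalarLinear_extendAlong (hcen : ∀ r ∈ Subring.center R, ι r ∈ Subring.center T)
    {φ : R[G] →+ R[G]} (hφ : IsScalarLinear φ) : IsScalarLinear (extendAlong ι φ) :=
  fun t x => ⟨extendAlong_single_one_mul φ t x, extendAlong_mul_single_one hcen hφ t x⟩

theorem extendAlong_mapRingHom {φ : R[G] →+ R[G]} (hφ : IsScalarLinear φ) (x : R[G]) :
    extendAlong ι φ (mapRingHom G ι x) = mapRingHom G ι (φ x) := by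
  induction x using induction_linear with
  | zero => simp
  | add a b ha hb => rw [map_add, map_add, ha, hb, map_add, map_add]
  | single g r =>
    rw [mapRingHom_single, extendAlong_single, ← mapRingHom_single, ← map_mul, ← (hφ r _).1,
      single_mul_single, one_mul, mul_one]

theorem extendAlong_mul (hcen : ∀ r ∈ Subring.center R, ι r ∈ Subring.center T)
    {σ τ δ : R[G] →+ R[G]} (hσ : IsScalarLinear σ) (hδ : IsScalarLinear δ)
    (hleib : ∀ a b, δ (a * b) = δ a * τ b + σ a * δ b) (a b : T[G]) :
    extendAlong ι δ (a * b) =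
      extendAlong ι δ a * extendAlong ι τ b + extendAlong ι σ a * extendAlong ι δ b := by
  refine leibniz_of_single _ _ _ (fun g g' t t' => ?_) a b
  have hR : single (g * g') (1 : R) = single g 1 * single g' 1 := by
    rw [single_mul_single, mul_one]
  have hT : single 1 (t * t') = single (1 : G) t * single 1 t' := by
    rw [single_mul_single, one_mul]
  simp only [single_mul_single, extendAlong_single]
  rw [hR, hleib, map_add, map_mul, map_mul, hT, mul_add,
    (commute_single_one_mapRingHom hcen hδ g t').symm.mul_mul_mul_comm,
    (commute_single_one_mapRingHom hcen hσ g t').symm.mul_mul_mul_comm]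

theorem exists_ringHom_coe_eq_extendAlong
    (hcen : ∀ r ∈ Subring.center R, ι r ∈ Subring.center T) (σ : R[G] →+* R[G])
    (hσ : IsScalarLinear σ) : ∃ σT : T[G] →+* T[G], ⇑σT = extendAlong ι (σ : R[G] →+ R[G]) :=
  ⟨liftNCRingHom singleOneRingHom
    ((mapRingHom G ι : R[G] →* T[G]).comp ((σ : R[G] →* R[G]).comp (of R G))) fun t g =>
      commute_single_one_mapRingHom hcen hσ g t, rfl⟩

end Extension

theorem extendAlong_eq_self_of_mem_center {R T G : Type*} [Ring R] [Ring T] [Group G]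
    {ι : R →+* T} {φ : R[G] →+ R[G]} (hφ : IsScalarLinear φ)
    (hφc : ∀ x ∈ Subring.center R[G], φ x = x) {x : T[G]} (hx : x ∈ Subring.center T[G]) :
    extendAlong ι φ x = x := by
  classical
  have hcentral : ∀ t, ∑ g ∈ x.coeff.support.filter (x.coeff · = t), single g (1 : R) ∈
      Subring.center R[G] := fun t => sum_single_one_mem_center fun h g hg => by
    simpa [Finset.mem_filter, Finsupp.mem_support_iff, coeff_conj_of_mem_center hx] using hg
  rw [eq_sum_single_one_mul_sum_fiber x, map_sum]
  refine Finset.sum_congr rfl fun t _ => ?_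
  have hmap : ∑ g ∈ x.coeff.support.filter (x.coeff · = t), single g (1 : T) =
      mapRingHom G ι (∑ g ∈ x.coeff.support.filter (x.coeff · = t), single g 1) := by simp
  rw [extendAlong_single_one_mul, hmap, extendAlong_mapRingHom hφ, hφc _ (hcentral t)]

end MonoidAlgebra

theorem twisted_derivation_extension_general {R T G : Type*} [Ring R] [Ring T] [Group G]
    (ι : R →+* T)
    (hcen : ∀ r ∈ Subring.center R, ι r ∈ Subring.center T)
    (σ τ : MonoidAlgebra R G →+* MonoidAlgebra R G)
    (hσlin : ∀ (r : R) (x : MonoidAlgebra R G),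
      σ (MonoidAlgebra.single 1 r * x) = MonoidAlgebra.single 1 r * σ x ∧
      σ (x * MonoidAlgebra.single 1 r) = σ x * MonoidAlgebra.single 1 r)
    (hτlin : ∀ (r : R) (x : MonoidAlgebra R G),
      τ (MonoidAlgebra.single 1 r * x) = MonoidAlgebra.single 1 r * τ x ∧
      τ (x * MonoidAlgebra.single 1 r) = τ x * MonoidAlgebra.single 1 r)
    (hσc : ∀ x ∈ Subring.center (MonoidAlgebra R G), σ x = x)
    (hτc : ∀ x ∈ Subring.center (MonoidAlgebra R G), τ x = x)
    (δ : MonoidAlgebra R G →+ MonoidAlgebra R G)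
    (hδlin : ∀ (r : R) (x : MonoidAlgebra R G),
      δ (MonoidAlgebra.single 1 r * x) = MonoidAlgebra.single 1 r * δ x ∧
      δ (x * MonoidAlgebra.single 1 r) = δ x * MonoidAlgebra.single 1 r)
    (hδ : ∀ a b : MonoidAlgebra R G, δ (a * b) = δ a * τ b + σ a * δ b) :
    ∃ σT τT : MonoidAlgebra T G →+* MonoidAlgebra T G,
      (∀ (t : T) (x : MonoidAlgebra T G),
        σT (MonoidAlgebra.single 1 t * x) = MonoidAlgebra.single 1 t * σT x ∧
        σT (x * MonoidAlgebra.single 1 t) = σT x * MonoidAlgebra.single 1 t) ∧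
      (∀ (t : T) (x : MonoidAlgebra T G),
        τT (MonoidAlgebra.single 1 t * x) = MonoidAlgebra.single 1 t * τT x ∧
        τT (x * MonoidAlgebra.single 1 t) = τT x * MonoidAlgebra.single 1 t) ∧
      (∀ x ∈ Subring.center (MonoidAlgebra T G), σT x = x) ∧
      (∀ x ∈ Subring.center (MonoidAlgebra T G), τT x = x) ∧
      (∀ x : MonoidAlgebra R G,
        σT (MonoidAlgebra.ofCoeff (Finsupp.mapRange (⇑ι) ι.map_zero (x).coeff)) = MonoidAlgebra.ofCoeff (Finsupp.mapRange (⇑ι) ι.map_zero (σ x).coeff)) ∧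
      (∀ x : MonoidAlgebra R G,
        τT (MonoidAlgebra.ofCoeff (Finsupp.mapRange (⇑ι) ι.map_zero (x).coeff)) = MonoidAlgebra.ofCoeff (Finsupp.mapRange (⇑ι) ι.map_zero (τ x).coeff)) ∧
      ∃ δT : MonoidAlgebra T G →+ MonoidAlgebra T G,
        (∀ (t : T) (x : MonoidAlgebra T G),
          δT (MonoidAlgebra.single 1 t * x) = MonoidAlgebra.single 1 t * δT x ∧
          δT (x * MonoidAlgebra.single 1 t) = δT x * MonoidAlgebra.single 1 t) ∧
        (∀ a b : MonoidAlgebra T G, δT (a * b) = δT a * τT b + σT a * δT b) ∧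
        (∀ x : MonoidAlgebra R G,
          δT (MonoidAlgebra.ofCoeff (Finsupp.mapRange (⇑ι) ι.map_zero (x).coeff)) = MonoidAlgebra.ofCoeff (Finsupp.mapRange (⇑ι) ι.map_zero (δ x).coeff)) := by
  have hσ : IsScalarLinear (σ : R[G] →+ R[G]) := hσlin
  have hτ : IsScalarLinear (τ : R[G] →+ R[G]) := hτlin
  obtain ⟨σT, hσT⟩ := exists_ringHom_coe_eq_extendAlong hcen σ hσ
  obtain ⟨τT, hτT⟩ := exists_ringHom_coe_eq_extendAlong hcen τ hτ
  refine ⟨σT, τT, hσT ▸ isScalarLinear_extendAlong hcen hσ,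
    hτT ▸ isScalarLinear_extendAlong hcen hτ,
    hσT ▸ fun _ => extendAlong_eq_self_of_mem_center hσ hσc,
    hτT ▸ fun _ => extendAlong_eq_self_of_mem_center hτ hτc,
    hσT ▸ extendAlong_mapRingHom hσ, hτT ▸ extendAlong_mapRingHom hτ,
    extendAlong ι δ, isScalarLinear_extendAlong hcen hδlin,
    hσT ▸ hτT ▸ extendAlong_mul hcen hσ hδlin hδ, extendAlong_mapRingHom hδlin⟩

/-- Extension lemma. Let `R ⊆ T` be rings with `1` (given by an injective unital
ring homomorphism `ι : R → T` mapping the center of `R` into the center of `T`) and `G` a group.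
Given `R`-linear ring endomorphisms `σ, τ` of `R[G]` fixing the center of `R[G]` pointwise and an
`R`-linear `(σ,τ)`-derivation `δ` of `R[G]`, there are `T`-linear ring endomorphisms `σ_T, τ_T`
of `T[G]` fixing the center of `T[G]` pointwise and extending `σ, τ`, and a `T`-linear
`(σ_T,τ_T)`-derivation `δ_T` of `T[G]` extending `δ`, along the coefficientwise map
`R[G] → T[G]`. -/
theorem twisted_derivation_extension {R T G : Type*} [Ring R] [Ring T] [Group G]
    (ι : R →+* T) (hι : Function.Injective ι)
    (hcen : ∀ r ∈ Subring.center R, ι r ∈ Subring.center T)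
    (σ τ : MonoidAlgebra R G →+* MonoidAlgebra R G)
    (hσlin : ∀ (r : R) (x : MonoidAlgebra R G),
      σ (MonoidAlgebra.single 1 r * x) = MonoidAlgebra.single 1 r * σ x ∧
      σ (x * MonoidAlgebra.single 1 r) = σ x * MonoidAlgebra.single 1 r)
    (hτlin : ∀ (r : R) (x : MonoidAlgebra R G),
      τ (MonoidAlgebra.single 1 r * x) = MonoidAlgebra.single 1 r * τ x ∧
      τ (x * MonoidAlgebra.single 1 r) = τ x * MonoidAlgebra.single 1 r)
    (hσc : ∀ x ∈ Subring.center (MonoidAlgebra R G), σ x = x)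
    (hτc : ∀ x ∈ Subring.center (MonoidAlgebra R G), τ x = x)
    (δ : MonoidAlgebra R G →+ MonoidAlgebra R G)
    (hδlin : ∀ (r : R) (x : MonoidAlgebra R G),
      δ (MonoidAlgebra.single 1 r * x) = MonoidAlgebra.single 1 r * δ x ∧
      δ (x * MonoidAlgebra.single 1 r) = δ x * MonoidAlgebra.single 1 r)
    (hδ : ∀ a b : MonoidAlgebra R G, δ (a * b) = δ a * τ b + σ a * δ b) :
    ∃ σT τT : MonoidAlgebra T G →+* MonoidAlgebra T G,
      (∀ (t : T) (x : MonoidAlgebra T G),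
        σT (MonoidAlgebra.single 1 t * x) = MonoidAlgebra.single 1 t * σT x ∧
        σT (x * MonoidAlgebra.single 1 t) = σT x * MonoidAlgebra.single 1 t) ∧
      (∀ (t : T) (x : MonoidAlgebra T G),
        τT (MonoidAlgebra.single 1 t * x) = MonoidAlgebra.single 1 t * τT x ∧
        τT (x * MonoidAlgebra.single 1 t) = τT x * MonoidAlgebra.single 1 t) ∧
      (∀ x ∈ Subring.center (MonoidAlgebra T G), σT x = x) ∧
      (∀ x ∈ Subring.center (MonoidAlgebra T G), τT x = x) ∧
      (∀ x : MonoidAlgebra R G,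
        σT (MonoidAlgebra.ofCoeff (Finsupp.mapRange (⇑ι) ι.map_zero (x).coeff)) = MonoidAlgebra.ofCoeff (Finsupp.mapRange (⇑ι) ι.map_zero (σ x).coeff)) ∧
      (∀ x : MonoidAlgebra R G,
        τT (MonoidAlgebra.ofCoeff (Finsupp.mapRange (⇑ι) ι.map_zero (x).coeff)) = MonoidAlgebra.ofCoeff (Finsupp.mapRange (⇑ι) ι.map_zero (τ x).coeff)) ∧
      ∃ δT : MonoidAlgebra T G →+ MonoidAlgebra T G,
        (∀ (t : T) (x : MonoidAlgebra T G),
          δT (MonoidAlgebra.single 1 t * x) = MonoidAlgebra.single 1 t * δT x ∧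
          δT (x * MonoidAlgebra.single 1 t) = δT x * MonoidAlgebra.single 1 t) ∧
        (∀ a b : MonoidAlgebra T G, δT (a * b) = δT a * τT b + σT a * δT b) ∧
        (∀ x : MonoidAlgebra R G,
          δT (MonoidAlgebra.ofCoeff (Finsupp.mapRange (⇑ι) ι.map_zero (x).coeff)) = MonoidAlgebra.ofCoeff (Finsupp.mapRange (⇑ι) ι.map_zero (δ x).coeff)) :=
  twisted_derivation_extension_general ι hcen σ τ hσlin hτlin hσc hτc δ hδlin hδ
end

section
/- Let R be a ring with 1, G a group, and let σ and τ be R-linear ring endomorphisms of the group ring RG. Let δ be an R-linear (σ,τ)-derivation of RG. Then for every g ∈ G, the elements δ(g), σ(g) and τ(g) lie in Z(R)G, i.e., all their coefficients lie in the center Z(R) of R. -/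
/-!
Each `single g 1` commutes with every scalar `single 1 r`, and a map commuting with left and right
multiplication by `single 1 r` carries elements commuting with `single 1 r` to such elements. An
element of `R[G]` commuting with all `single 1 r` has central coefficients.
-/

theorem Commute.map_of_map_mul_left_of_map_mul_right {M : Type*} [Mul M] {f : M → M} {a x : M}
    (hl : f (a * x) = a * f x) (hr : f (x * a) = f x * a) (h : Commute a x) :
    Commute a (f x) := by
  rw [Commute, SemiconjBy, ← hl, h.eq, hr]

namespace MonoidAlgebra

variable {R M : Type*} [Ring R]

theorem coeff_mem_center_of_forall_commute_single_one [MulOneClass M] {y : MonoidAlgebra R M}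
    (h : ∀ r : R, Commute (single 1 r) y) (m : M) : y.coeff m ∈ Subring.center R := by
  rw [Subring.mem_center_iff]
  intro r
  simpa only [coeff_single_one_mul, coeff_mul_single_one] using
    congrArg (fun z : MonoidAlgebra R M => z.coeff m) (h r).eq

theorem coeff_map_single_one_mem_center [Monoid M] {f : MonoidAlgebra R M → MonoidAlgebra R M}
    (hf : ∀ (r : R) (x : MonoidAlgebra R M),
      f (single 1 r * x) = single 1 r * f x ∧ f (x * single 1 r) = f x * single 1 r)
    (g m : M) : (f (single g 1)).coeff m ∈ Subring.center R :=
  coeff_mem_center_of_forall_commute_single_one (fun r =>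
    Commute.map_of_map_mul_left_of_map_mul_right (hf r _).1 (hf r _).2
      (single_commute_single (Commute.one_left g) (Commute.one_right r))) m

end MonoidAlgebra

theorem twisted_derivation_coeffs_central_general {R G : Type*} [Ring R] [Group G]
    (σ τ : MonoidAlgebra R G →+* MonoidAlgebra R G)
    (hσlin : ∀ (r : R) (x : MonoidAlgebra R G),
      σ (MonoidAlgebra.single 1 r * x) = MonoidAlgebra.single 1 r * σ x ∧
      σ (x * MonoidAlgebra.single 1 r) = σ x * MonoidAlgebra.single 1 r)
    (hτlin : ∀ (r : R) (x : MonoidAlgebra R G),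
      τ (MonoidAlgebra.single 1 r * x) = MonoidAlgebra.single 1 r * τ x ∧
      τ (x * MonoidAlgebra.single 1 r) = τ x * MonoidAlgebra.single 1 r)
    (δ : MonoidAlgebra R G →+ MonoidAlgebra R G)
    (hδlin : ∀ (r : R) (x : MonoidAlgebra R G),
      δ (MonoidAlgebra.single 1 r * x) = MonoidAlgebra.single 1 r * δ x ∧
      δ (x * MonoidAlgebra.single 1 r) = δ x * MonoidAlgebra.single 1 r) :
    ∀ g x : G,
      (δ (MonoidAlgebra.single g 1)).coeff x ∈ Subring.center R ∧
      (σ (MonoidAlgebra.single g 1)).coeff x ∈ Subring.center R ∧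
      (τ (MonoidAlgebra.single g 1)).coeff x ∈ Subring.center R := fun g x =>
  ⟨MonoidAlgebra.coeff_map_single_one_mem_center hδlin g x,
    MonoidAlgebra.coeff_map_single_one_mem_center hσlin g x,
    MonoidAlgebra.coeff_map_single_one_mem_center hτlin g x⟩

/-- Let `R` be a ring with `1`, `G` a group, `σ, τ` `R`-linear ring
endomorphisms of `R[G]` and `δ` an `R`-linear `(σ,τ)`-derivation of `R[G]`. Then for every
`g ∈ G` all coefficients of `δ(g)`, `σ(g)` and `τ(g)` lie in the center `Z(R)`. -/
theorem twisted_derivation_coeffs_central {R G : Type*} [Ring R] [Group G]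
    (σ τ : MonoidAlgebra R G →+* MonoidAlgebra R G)
    (hσlin : ∀ (r : R) (x : MonoidAlgebra R G),
      σ (MonoidAlgebra.single 1 r * x) = MonoidAlgebra.single 1 r * σ x ∧
      σ (x * MonoidAlgebra.single 1 r) = σ x * MonoidAlgebra.single 1 r)
    (hτlin : ∀ (r : R) (x : MonoidAlgebra R G),
      τ (MonoidAlgebra.single 1 r * x) = MonoidAlgebra.single 1 r * τ x ∧
      τ (x * MonoidAlgebra.single 1 r) = τ x * MonoidAlgebra.single 1 r)
    (δ : MonoidAlgebra R G →+ MonoidAlgebra R G)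
    (hδlin : ∀ (r : R) (x : MonoidAlgebra R G),
      δ (MonoidAlgebra.single 1 r * x) = MonoidAlgebra.single 1 r * δ x ∧
      δ (x * MonoidAlgebra.single 1 r) = δ x * MonoidAlgebra.single 1 r)
    (hδ : ∀ a b : MonoidAlgebra R G, δ (a * b) = δ a * τ b + σ a * δ b) :
    ∀ g x : G,
      (δ (MonoidAlgebra.single g 1)).coeff x ∈ Subring.center R ∧
      (σ (MonoidAlgebra.single g 1)).coeff x ∈ Subring.center R ∧
      (τ (MonoidAlgebra.single g 1)).coeff x ∈ Subring.center R :=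
  twisted_derivation_coeffs_central_general σ τ hσlin hτlin δ hδlin
end

section
/- Let R be a ring with 1, G a group, and let σ and τ be R-linear ring endomorphisms of the group ring RG fixing the center Z(RG) pointwise. Let δ be an R-linear (σ,τ)-derivation of RG. If z is an element of the center Z(G) of G of finite order m, and RG has no m-torsion (i.e., m·β = 0 implies β = 0 for β ∈ RG), then δ(z) = 0. -/
/-!
A central group element `z` of order `m` gives a central unit `u` of `R[G]` with `u ^ m = 1`,
fixed by `σ` and `τ`. The twisted Leibniz rule then behaves on powers of `u` like the ordinary
one: `u * δ (u ^ n) = n • (u ^ n * δ u)`. Taking `n = m` gives `m • δ u = u * δ 1 = 0`, and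
the absence of `m`-torsion forces `δ u = 0`.
-/

section TwistedDerivation

variable {A : Type*} [Ring A]

def IsTwistedDerivation_s9 (σ τ : A →+* A) (δ : A →+ A) : Prop :=
  ∀ a b, δ (a * b) = δ a * τ b + σ a * δ b

namespace IsTwistedDerivation_s9

variable {σ τ : A →+* A} {δ : A →+ A}

theorem map_one (hδ : IsTwistedDerivation_s9 σ τ δ) : δ 1 = 0 := by
  have h := hδ 1 1
  rw [one_mul, σ.map_one, τ.map_one, mul_one, one_mul] at h
  exact left_eq_add.mp h

theorem mul_map_pow (hδ : IsTwistedDerivation_s9 σ τ δ) {u : A} (hσ : σ u = u) (hτ : τ u = u)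
    (hu : Commute u (δ u)) (n : ℕ) : u * δ (u ^ n) = n • (u ^ n * δ u) := by
  induction n with
  | zero => rw [pow_zero, hδ.map_one, mul_zero, zero_smul]
  | succ n ih =>
    calc u * δ (u ^ (n + 1))
        = u * δ (u ^ n) * u + u ^ (n + 1) * δ u := by
          rw [pow_succ, hδ, map_pow σ, hσ, hτ, mul_add, ← mul_assoc, ← mul_assoc,
            ← pow_succ', pow_succ]
      _ = (n + 1) • (u ^ (n + 1) * δ u) := by
          rw [ih, smul_mul_assoc, mul_assoc, ← hu.eq, ← mul_assoc, ← pow_succ, succ_nsmul]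

theorem map_eq_zero_of_pow_eq_one (hδ : IsTwistedDerivation_s9 σ τ δ) {u : A} (hσ : σ u = u)
    (hτ : τ u = u) (hu : Commute u (δ u)) {m : ℕ} (hum : u ^ m = 1)
    (hnt : ∀ β : A, m • β = 0 → β = 0) : δ u = 0 :=
  hnt _ <| by
    simpa only [hum, one_mul, hδ.map_one, mul_zero] using (hδ.mul_map_pow hσ hτ hu m).symm

end IsTwistedDerivation_s9

end TwistedDerivation

theorem MonoidAlgebra.single_one_mem_center {R G : Type*} [Ring R] [Group G] {z : G}
    (hz : z ∈ Subgroup.center G) :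
    MonoidAlgebra.single z (1 : R) ∈ Subring.center (MonoidAlgebra R G) :=
  Subring.mem_center_iff.mpr fun x =>
    (MonoidAlgebra.single_commute (fun g => (Subgroup.mem_center_iff.mp hz g).symm)
      Commute.one_left x).eq.symm

theorem twisted_derivation_central_group_element_general {R G : Type*} [Ring R] [Group G]
    (σ τ : MonoidAlgebra R G →+* MonoidAlgebra R G)
    (hσc : ∀ x ∈ Subring.center (MonoidAlgebra R G), σ x = x)
    (hτc : ∀ x ∈ Subring.center (MonoidAlgebra R G), τ x = x)
    (δ : MonoidAlgebra R G →+ MonoidAlgebra R G)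
    (hδ : ∀ a b : MonoidAlgebra R G, δ (a * b) = δ a * τ b + σ a * δ b)
    (z : G) (hz : z ∈ Subgroup.center G) (m : ℕ) (hord : orderOf z = m)
    (hnt : ∀ β : MonoidAlgebra R G, m • β = 0 → β = 0) :
    δ (MonoidAlgebra.single z 1) = 0 := by
  have hcen := MonoidAlgebra.single_one_mem_center (R := R) hz
  have hpow : MonoidAlgebra.single z (1 : R) ^ m = 1 := by
    rw [MonoidAlgebra.single_pow, one_pow, ← hord, pow_orderOf_eq_one, MonoidAlgebra.one_def]
  exact IsTwistedDerivation_s9.map_eq_zero_of_pow_eq_one hδ (hσc _ hcen) (hτc _ hcen)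
    (Subring.mem_center_iff.mp hcen _).symm hpow hnt

/-- Let `R` be a ring with `1`, `G` a group, `σ, τ` `R`-linear ring
endomorphisms of `R[G]` fixing the center of `R[G]` pointwise and `δ` an `R`-linear
`(σ,τ)`-derivation of `R[G]`. If `z` is a central element of `G` of finite order `m` and `R[G]`
has no `m`-torsion, then `δ(z) = 0`. -/
theorem twisted_derivation_central_group_element {R G : Type*} [Ring R] [Group G]
    (σ τ : MonoidAlgebra R G →+* MonoidAlgebra R G)
    (hσlin : ∀ (r : R) (x : MonoidAlgebra R G),
      σ (MonoidAlgebra.single 1 r * x) = MonoidAlgebra.single 1 r * σ x ∧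
      σ (x * MonoidAlgebra.single 1 r) = σ x * MonoidAlgebra.single 1 r)
    (hτlin : ∀ (r : R) (x : MonoidAlgebra R G),
      τ (MonoidAlgebra.single 1 r * x) = MonoidAlgebra.single 1 r * τ x ∧
      τ (x * MonoidAlgebra.single 1 r) = τ x * MonoidAlgebra.single 1 r)
    (hσc : ∀ x ∈ Subring.center (MonoidAlgebra R G), σ x = x)
    (hτc : ∀ x ∈ Subring.center (MonoidAlgebra R G), τ x = x)
    (δ : MonoidAlgebra R G →+ MonoidAlgebra R G)
    (hδlin : ∀ (r : R) (x : MonoidAlgebra R G),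
      δ (MonoidAlgebra.single 1 r * x) = MonoidAlgebra.single 1 r * δ x ∧
      δ (x * MonoidAlgebra.single 1 r) = δ x * MonoidAlgebra.single 1 r)
    (hδ : ∀ a b : MonoidAlgebra R G, δ (a * b) = δ a * τ b + σ a * δ b)
    (z : G) (hz : z ∈ Subgroup.center G) (m : ℕ) (hm : 0 < m) (hord : orderOf z = m)
    (hnt : ∀ β : MonoidAlgebra R G, m • β = 0 → β = 0) :
    δ (MonoidAlgebra.single z 1) = 0 :=
  twisted_derivation_central_group_element_general σ τ hσc hτc δ hδ z hz m hord hnt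
end

section
/- Let G be a finite group and let σ and τ be normalized automorphisms of the integral group ring ℤG that fix the center Z(ℤG) pointwise. Suppose ℤG satisfies (ZC2): every finite subgroup of V(ℤG) with the same order as G is rationally conjugate to G. Then there exist group automorphisms σ₁ and τ₁ of G and units u, v of the rational group algebra ℚG such that σ(g) = u⁻¹σ₁(g)u and τ(g) = v⁻¹τ₁(g)v for all g ∈ G, the ℤ-linear extensions of σ₁ and τ₁ to ℤG fix Z(ℤG) pointwise, and every ℤ-linear (σ₁,τ₁)-derivation of ℤG is (σ₁,τ₁)-inner (equivalently, H¹(ℤG, ₛ₁ℤGₜ₁) = 0). -/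
/-- The augmentation map `ℤ[G] → ℤ`, sending every `g ∈ G` to `1`. -/
noncomputable def augZ (G : Type*) [Group G] : MonoidAlgebra ℤ G →ₐ[ℤ] ℤ :=
  MonoidAlgebra.lift ℤ ℤ G 1

/-- The canonical coefficientwise embedding `ℤ[G] → ℚ[G]`. -/
noncomputable def embQ (G : Type*) [Group G] :
    MonoidAlgebra ℤ G →ₐ[ℤ] MonoidAlgebra ℚ G :=
  MonoidAlgebra.lift ℤ (MonoidAlgebra ℚ G) G (MonoidAlgebra.of ℚ G)

/-!
(ZC2), applied to the image of `G` under `σ`, yields `σ₁ ∈ Aut G` and `u ∈ ℚ[G]ˣ` with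
`σ = u⁻¹ σ₁ u` on `G`, hence on all of `ℤ[G]`; since `σ` fixes the centre and central elements
commute with `u`, so does `σ₁`. A `(σ₁, τ₁)`-derivation `δ` gives the 1-cocycle
`g ↦ δ(g) τ₁(g)⁻¹` with values in `ℤ[G]`, a permutation module for the action
`q ↦ σ₁(g) q τ₁(g)⁻¹`. Such a cocycle vanishes on stabilizers (there it is a homomorphism from a
finite group to `ℤ`), so fixing a representative of each orbit turns it into a coboundary, i.e.
`δ` is inner.
-/

-- `F` is a 1-cocycle of `G` with values in the permutation module `X → M`,
-- on which `(g • c) x = c (ρ g⁻¹ x)`.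
def IsPermCocycle {G X M : Type*} [Group G] [AddGroup M] (ρ : G →* Equiv.Perm X)
    (F : G → X → M) : Prop :=
  ∀ g h x, F (g * h) x = F g x + F h (ρ g⁻¹ x)

namespace IsPermCocycle

variable {G X M : Type*} [Group G] [AddGroup M] {ρ : G →* Equiv.Perm X} {F : G → X → M}

theorem apply_one (hF : IsPermCocycle ρ F) (x : X) : F 1 x = 0 := by
  simpa using hF 1 1 x

theorem apply_pow_of_apply_eq (hF : IsPermCocycle ρ F) {s : G} {x : X} (hs : ρ s x = x) :
    ∀ n : ℕ, F (s ^ n) x = n • F s x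
  | 0 => by simpa using hF.apply_one x
  | n + 1 => by
    have hs' : ρ s⁻¹ x = x := by rw [map_inv, Equiv.Perm.inv_eq_iff_eq, hs]
    rw [pow_succ', hF, hs', apply_pow_of_apply_eq hF hs n, succ_nsmul']

theorem apply_eq_zero_of_apply_eq [Finite G] [IsAddTorsionFree M] (hF : IsPermCocycle ρ F)
    {s : G} {x : X} (hs : ρ s x = x) : F s x = 0 := by
  have h := hF.apply_pow_of_apply_eq hs (orderOf s)
  rw [pow_orderOf_eq_one, hF.apply_one, eq_comm] at h
  exact (nsmul_eq_zero_iff_right (orderOf_pos s).ne').mp h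

theorem apply_eq_of_apply_eq [Finite G] [IsAddTorsionFree M] (hF : IsPermCocycle ρ F)
    {r r' : G} {x y : X} (hr : ρ r y = x) (hr' : ρ r' y = x) : F r' x = F r x := by
  have hy : ρ r⁻¹ x = y := by rw [map_inv, Equiv.Perm.inv_eq_iff_eq, hr]
  have hfix : ρ (r⁻¹ * r') y = y := by rw [map_mul, Equiv.Perm.mul_apply, hr', hy]
  rw [← mul_inv_cancel_left r r', hF, hy, hF.apply_eq_zero_of_apply_eq hfix, add_zero]

theorem exists_eq_sub [Finite G] [IsAddTorsionFree M] (hF : IsPermCocycle ρ F) :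
    ∃ c : X → M, ∀ g x, F g x = c x - c (ρ g⁻¹ x) := by
  let := MulAction.compHom X ρ
  let rep (x : X) : X := (⟦x⟧ : MulAction.orbitRel.Quotient G X).out
  have rep_apply (g : G) (x : X) : rep (ρ g x) = rep x :=
    congrArg Quotient.out (Quotient.sound ⟨g, rfl⟩)
  have exists_apply_rep (x : X) : ∃ r : G, ρ r (rep x) = x := by
    obtain ⟨r, hr⟩ := Quotient.mk_out (s := MulAction.orbitRel G X) x
    exact ⟨r⁻¹, by rw [map_inv, Equiv.Perm.inv_eq_iff_eq]; exact hr.symm⟩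
  choose r hr using exists_apply_rep
  refine ⟨fun x => F (r x) x, fun g x => ?_⟩
  have hstep : ρ (g⁻¹ * r x) (rep (ρ g⁻¹ x)) = ρ g⁻¹ x := by
    rw [rep_apply, map_mul, Equiv.Perm.mul_apply, hr]
  have hsplit := hF g (g⁻¹ * r x) x
  rw [mul_inv_cancel_left, hF.apply_eq_of_apply_eq (hr _) hstep] at hsplit
  exact eq_sub_of_add_eq hsplit.symm

end IsPermCocycle

open MonoidAlgebra

def twistedMulPerm {G : Type*} [Group G] (σ τ : G →* G) : G →* Equiv.Perm G where
  toFun g := (Equiv.mulRight (τ g)⁻¹).trans (Equiv.mulLeft (σ g))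
  map_one' := by ext; simp
  map_mul' g h := by ext; simp [mul_assoc]

@[simp]
theorem twistedMulPerm_apply {G : Type*} [Group G] (σ τ : G →* G) (g q : G) :
    twistedMulPerm σ τ g q = σ g * q * (τ g)⁻¹ := by
  simp [twistedMulPerm, mul_assoc]

section TwistedDerivation

variable {G : Type*} [Group G] {σ τ : G →* G} {δ : ℤ[G] →+ ℤ[G]}

theorem isPermCocycle_coeff_of_twistedDerivation
    (hδ : ∀ a b, δ (a * b) = δ a * mapDomainRingHom ℤ τ b + mapDomainRingHom ℤ σ a * δ b) :
    IsPermCocycle (twistedMulPerm σ τ) fun g q => (δ (of ℤ G g)).coeff (q * τ g) := by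
  intro g h q
  rw [twistedMulPerm_apply]
  simp only [map_mul, hδ, mapDomainRingHom_apply, of_apply, mapDomain_single, coeff_add,
    Finsupp.add_apply, coeff_mul_single_apply, coeff_single_mul_apply, map_inv]
  congr 2 <;> group

theorem twistedDerivation_exists_inner [Finite G]
    (hδ : ∀ a b, δ (a * b) = δ a * mapDomainRingHom ℤ τ b + mapDomainRingHom ℤ σ a * δ b) :
    ∃ x : ℤ[G], ∀ a, δ a = x * mapDomainRingHom ℤ τ a - mapDomainRingHom ℤ σ a * x := by
  obtain ⟨c, hc⟩ := (isPermCocycle_coeff_of_twistedDerivation hδ).exists_eq_sub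
  set x : ℤ[G] := ofCoeff (Finsupp.equivFunOnFinite.symm c)
  suffices δ = (AddMonoidHom.mulLeft x).comp (mapDomainRingHom ℤ τ).toAddMonoidHom -
      (AddMonoidHom.mulRight x).comp (mapDomainRingHom ℤ σ).toAddMonoidHom from
    ⟨x, fun a => DFunLike.congr_fun this a⟩
  ext g q
  have hcg := hc g (q * (τ g)⁻¹)
  rw [twistedMulPerm_apply] at hcg
  simpa [x, mul_assoc] using hcg

end TwistedDerivation

theorem MonoidAlgebra.mem_center_of_forall_commute_of {k G : Type*} [CommRing k] [Monoid G]
    {x : k[G]} (hx : ∀ g, Commute (of k G g) x) : x ∈ Subring.center k[G] := by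
  refine Subring.mem_center_iff.mpr fun b => ?_
  induction b using MonoidAlgebra.induction_on with
  | of g => exact hx g
  | add b b' hb hb' => exact Commute.add_left hb hb'
  | smul r b hb => rw [smul_mul_assoc, mul_smul_comm, hb]

theorem MonoidHom.exists_mulEquiv_of_conj_image_range_eq {G A : Type*} [Group G] [Monoid A]
    {φ ι : G →* A} (hφ : Function.Injective φ) (hι : Function.Injective ι) (w : Aˣ)
    (h : (fun a : A => ↑w⁻¹ * a * ↑w) '' Set.range φ = Set.range ι) :
    ∃ σ₁ : G ≃* G, ∀ g, φ g = ↑w * ι (σ₁ g) * ↑w⁻¹ := by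
  have hmem (g : G) : ↑w⁻¹ * φ g * ↑w ∈ Set.range ι := h ▸ ⟨φ g, ⟨g, rfl⟩, rfl⟩
  choose s hs using hmem
  have hmul (g g' : G) : s (g * g') = s g * s g' :=
    hι (by simp only [map_mul, hs, mul_assoc, Units.mul_inv_cancel_left])
  have hinj : Function.Injective s := fun g g' e => hφ <| by
    simpa only [hs, Units.mul_left_inj, Units.mul_right_inj] using congrArg ι e
  have hsurj : Function.Surjective s := fun k => by
    obtain ⟨_, ⟨g, rfl⟩, hg⟩ := h.symm ▸ Set.mem_range_self (f := ι) k
    exact ⟨g, hι (by rw [hs, ← hg])⟩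
  refine ⟨MulEquiv.ofBijective (MonoidHom.mk' s hmul) ⟨hinj, hsurj⟩, fun g => ?_⟩
  change φ g = ↑w * ι (s g) * ↑w⁻¹
  simp [hs, mul_assoc]

section GroupRing

variable {G : Type*} [Group G]

@[simp]
theorem embQ_single (g : G) (n : ℤ) : embQ G (single g n) = single g (n : ℚ) := by
  simp [embQ, lift_single, smul_single]

theorem embQ_eq_mapRingHom : (embQ G : ℤ[G] →+* ℚ[G]) = mapRingHom G (Int.castRingHom ℚ) :=
  ringHom_ext' (RingHom.ext_int _ _) (MonoidHom.ext fun g => by simp)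

theorem embQ_injective : Function.Injective (embQ G) := by
  have h := map_injective (M := G) (Int.castRingHom ℚ : ℤ →+ ℚ) Int.cast_injective
  rwa [← coe_mapRingHom, ← embQ_eq_mapRingHom] at h

theorem embQ_mem_center {x : ℤ[G]} (hx : x ∈ Subring.center ℤ[G]) :
    embQ G x ∈ Subring.center ℚ[G] :=
  mem_center_of_forall_commute_of fun g => by
    simpa using (show Commute (of ℤ G g) x from Subring.mem_center_iff.mp hx _).map (embQ G)

def SatisfiesZC2 (G : Type*) [Group G] : Prop :=
  ∀ H : Subgroup ℤ[G]ˣ,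
    (∀ w ∈ H, augZ G (w : ℤ[G]) = 1) →
    Nat.card H = Nat.card G →
    ∃ w : ℚ[G]ˣ,
      (fun a : ℚ[G] => ↑w⁻¹ * a * ↑w) '' ((fun z : ℤ[G]ˣ => embQ G (z : ℤ[G])) '' (H : Set ℤ[G]ˣ)) =
        Set.range (fun g : G => (of ℚ G g : ℚ[G]))

theorem SatisfiesZC2.exists_mulEquiv_conj (hG : SatisfiesZC2 G) (σ : ℤ[G] ≃+* ℤ[G])
    (hσn : ∀ a, augZ G (σ a) = augZ G a) :
    ∃ (σ₁ : G ≃* G) (u : ℚ[G]ˣ), ∀ g, embQ G (σ (of ℤ G g)) = ↑u⁻¹ * of ℚ G (σ₁ g) * ↑u := by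
  let f : G →* ℤ[G]ˣ := (Units.map (σ : ℤ[G] →* ℤ[G])).comp (of ℤ G).toHomUnits
  have hf : Function.Injective f := fun g g' e =>
    of_injective (σ.injective (congrArg Units.val e))
  obtain ⟨w, hw⟩ := hG f.range (by rintro _ ⟨g, rfl⟩; simpa [f, augZ] using hσn (of ℤ G g))
    (Nat.card_congr (MonoidHom.ofInjective hf).toEquiv).symm
  let φ : G →* ℚ[G] := (embQ G : ℤ[G] →* ℚ[G]).comp (σ.toMonoidHom.comp (of ℤ G))
  have hφ : Function.Injective φ := embQ_injective.comp (σ.injective.comp of_injective)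
  have hrange : (fun z : ℤ[G]ˣ => embQ G ↑z) '' (f.range : Set ℤ[G]ˣ) = Set.range φ := by
    rw [MonoidHom.coe_range, ← Set.range_comp]; rfl
  rw [hrange] at hw
  obtain ⟨σ₁, hσ₁⟩ := MonoidHom.exists_mulEquiv_of_conj_image_range_eq hφ of_injective w hw
  exact ⟨σ₁, w⁻¹, fun g => by simpa [φ] using hσ₁ g⟩

theorem mapDomainRingHom_fixes_center_of_conj (σ : ℤ[G] ≃+* ℤ[G])
    (hσc : ∀ x ∈ Subring.center ℤ[G], σ x = x) (σ₁ : G →* G) (u : ℚ[G]ˣ)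
    (hu : ∀ g, embQ G (σ (of ℤ G g)) = ↑u⁻¹ * of ℚ G (σ₁ g) * ↑u) :
    ∀ x ∈ Subring.center ℤ[G], mapDomainRingHom ℤ σ₁ x = x := by
  let conj : ℚ[G] →+* ℚ[G] :=
    MulSemiringAction.toRingHom (ConjAct ℚ[G]ˣ) ℚ[G] (ConjAct.toConjAct u⁻¹)
  have hconj : (embQ G : ℤ[G] →+* ℚ[G]).comp σ.toRingHom =
      conj.comp ((embQ G : ℤ[G] →+* ℚ[G]).comp (mapDomainRingHom ℤ σ₁)) :=
    ringHom_ext' (RingHom.ext_int _ _) (MonoidHom.ext fun g => by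
      simpa [conj, ConjAct.units_smul_def, mapDomain_single] using hu g)
  intro x hx
  apply embQ_injective
  have h := DFunLike.congr_fun hconj x
  simp only [RingHom.comp_apply, RingEquiv.toRingHom_eq_coe, RingEquiv.coe_toRingHom, hσc x hx,
    conj, MulSemiringAction.toRingHom_apply, ConjAct.units_smul_def, ConjAct.ofConjAct_toConjAct,
    inv_inv, AlgHom.coe_toRingHom] at h
  -- `h : x = u⁻¹ * σ₁ x * u` in `ℚ[G]`, and `x` commutes with `u`
  rw [mul_assoc, Units.eq_inv_mul_iff_mul_eq, Subring.mem_center_iff.mp (embQ_mem_center hx),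
    Units.mul_left_inj] at h
  exact h.symm

end GroupRing

/-- Let `G` be a finite group and `σ, τ` normalized automorphisms of `ℤ[G]`
fixing the center of `ℤ[G]` pointwise. If `ℤ[G]` satisfies (ZC2), then there are group
automorphisms `σ₁, τ₁` of `G` and units `u, v` of `ℚ[G]` with `σ(g) = u⁻¹σ₁(g)u` and
`τ(g) = v⁻¹τ₁(g)v` for all `g ∈ G`, whose `ℤ`-linear extensions to `ℤ[G]` fix the center of
`ℤ[G]` pointwise, and every `ℤ`-linear `(σ₁,τ₁)`-derivation of `ℤ[G]` is `(σ₁,τ₁)`-inner. -/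
theorem twisted_derivation_ZC2_aut {G : Type*} [Group G] [Fintype G]
    (σ τ : MonoidAlgebra ℤ G ≃+* MonoidAlgebra ℤ G)
    (hσn : ∀ a : MonoidAlgebra ℤ G, augZ G (σ a) = augZ G a)
    (hτn : ∀ a : MonoidAlgebra ℤ G, augZ G (τ a) = augZ G a)
    (hσc : ∀ x ∈ Subring.center (MonoidAlgebra ℤ G), σ x = x)
    (hτc : ∀ x ∈ Subring.center (MonoidAlgebra ℤ G), τ x = x)
    (hZC2 : ∀ H : Subgroup (MonoidAlgebra ℤ G)ˣ,
      (∀ w ∈ H, augZ G (w : MonoidAlgebra ℤ G) = 1) →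
      Nat.card H = Nat.card G →
      ∃ w : (MonoidAlgebra ℚ G)ˣ,
        (fun a : MonoidAlgebra ℚ G => ↑w⁻¹ * a * ↑w) ''
            ((fun z : (MonoidAlgebra ℤ G)ˣ => embQ G (z : MonoidAlgebra ℤ G)) ''
              (H : Set (MonoidAlgebra ℤ G)ˣ)) =
          Set.range (fun g : G => (MonoidAlgebra.of ℚ G g : MonoidAlgebra ℚ G))) :
    ∃ (σ₁ τ₁ : G ≃* G) (u v : (MonoidAlgebra ℚ G)ˣ),
      (∀ g : G, embQ G (σ (MonoidAlgebra.of ℤ G g)) =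
        ↑u⁻¹ * MonoidAlgebra.of ℚ G (σ₁ g) * ↑u) ∧
      (∀ g : G, embQ G (τ (MonoidAlgebra.of ℤ G g)) =
        ↑v⁻¹ * MonoidAlgebra.of ℚ G (τ₁ g) * ↑v) ∧
      (∀ x ∈ Subring.center (MonoidAlgebra ℤ G),
        MonoidAlgebra.mapDomainRingHom ℤ σ₁.toMonoidHom x = x) ∧
      (∀ x ∈ Subring.center (MonoidAlgebra ℤ G),
        MonoidAlgebra.mapDomainRingHom ℤ τ₁.toMonoidHom x = x) ∧
      ∀ δ : MonoidAlgebra ℤ G →+ MonoidAlgebra ℤ G,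
        (∀ a b : MonoidAlgebra ℤ G,
          δ (a * b) = δ a * MonoidAlgebra.mapDomainRingHom ℤ τ₁.toMonoidHom b
            + MonoidAlgebra.mapDomainRingHom ℤ σ₁.toMonoidHom a * δ b) →
        ∃ x : MonoidAlgebra ℤ G, ∀ a : MonoidAlgebra ℤ G,
          δ a = x * MonoidAlgebra.mapDomainRingHom ℤ τ₁.toMonoidHom a
            - MonoidAlgebra.mapDomainRingHom ℤ σ₁.toMonoidHom a * x := by
  have hZC2' : SatisfiesZC2 G := hZC2
  obtain ⟨σ₁, u, hu⟩ := hZC2'.exists_mulEquiv_conj σ hσn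
  obtain ⟨τ₁, v, hv⟩ := hZC2'.exists_mulEquiv_conj τ hτn
  refine ⟨σ₁, τ₁, u, v, hu, hv, ?_, ?_, fun _ hδ => twistedDerivation_exists_inner hδ⟩
  · exact mapDomainRingHom_fixes_center_of_conj σ hσc σ₁.toMonoidHom u hu
  · exact mapDomainRingHom_fixes_center_of_conj τ hτc τ₁.toMonoidHom v hv
end

section
/- Let G be an abelian group and R a commutative ring with 1 such that either R has no additive torsion elements or, if R has p-torsion elements for a prime p, then p does not divide the order of any element of G. Let σ and τ be two distinct R-algebra endomorphisms of the group ring RG. If there exists b ∈ RG such that τ(b) − σ(b) is a unit of RG, then every R-linear (σ,τ)-derivation δ of RG satisfies δ(a) = (τ(b) − σ(b))⁻¹ · δ(b) · (τ(a) − σ(a)) for all a ∈ RG. -/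
/-! In a commutative algebra `δ (a * b) = δ (b * a)`; expanding both sides with the twisted
Leibniz rule gives `δ a * (τ b - σ b) = δ b * (τ a - σ a)`, and dividing by the unit
`τ b - σ b` is the claim. -/

theorem mul_sub_eq_mul_sub_of_twisted_leibniz {A : Type*} [CommRing A] (σ τ δ : A → A)
    (hδ : ∀ a c, δ (a * c) = δ a * τ c + σ a * δ c) (a b : A) :
    δ a * (τ b - σ b) = δ b * (τ a - σ a) := by
  have hab := hδ a b
  rw [mul_comm, hδ b a] at hab
  linear_combination -hab

theorem twisted_derivation_commutative_group_algebra_general {R G : Type*} [CommRing R] [CommGroup G]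
    (σ τ : MonoidAlgebra R G →ₐ[R] MonoidAlgebra R G)
    (b : MonoidAlgebra R G) (w : (MonoidAlgebra R G)ˣ)
    (hw : (w : MonoidAlgebra R G) = τ b - σ b)
    (δ : MonoidAlgebra R G →ₗ[R] MonoidAlgebra R G)
    (hδ : ∀ a c : MonoidAlgebra R G, δ (a * c) = δ a * τ c + σ a * δ c) :
    ∀ a : MonoidAlgebra R G, δ a = ↑w⁻¹ * δ b * (τ a - σ a) := by
  intro a
  rw [mul_assoc, Units.eq_inv_mul_iff_mul_eq, hw, mul_comm]
  exact mul_sub_eq_mul_sub_of_twisted_leibniz σ τ δ hδ a b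

/-- Let `G` be an abelian group and `R` a commutative ring with `1` such that
if `R` has `p`-torsion elements for a prime `p` then `p` divides the order of no element of `G`.
Let `σ ≠ τ` be `R`-algebra endomorphisms of `R[G]`. If there is `b ∈ R[G]` with
`τ(b) − σ(b)` a unit of `R[G]`, then every `R`-linear `(σ,τ)`-derivation `δ` of `R[G]` satisfies
`δ(a) = (τ(b) − σ(b))⁻¹·δ(b)·(τ(a) − σ(a))` for all `a`. -/
theorem twisted_derivation_commutative_group_algebra {R G : Type*} [CommRing R] [CommGroup G]
    (htor : ∀ p : ℕ, p.Prime → (∃ r : R, r ≠ 0 ∧ p • r = 0) → ∀ g : G, ¬ p ∣ orderOf g)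
    (σ τ : MonoidAlgebra R G →ₐ[R] MonoidAlgebra R G) (hστ : σ ≠ τ)
    (b : MonoidAlgebra R G) (w : (MonoidAlgebra R G)ˣ)
    (hw : (w : MonoidAlgebra R G) = τ b - σ b)
    (δ : MonoidAlgebra R G →ₗ[R] MonoidAlgebra R G)
    (hδ : ∀ a c : MonoidAlgebra R G, δ (a * c) = δ a * τ c + σ a * δ c) :
    ∀ a : MonoidAlgebra R G, δ a = ↑w⁻¹ * δ b * (τ a - σ a) :=
  twisted_derivation_commutative_group_algebra_general σ τ b w hw δ hδ
end

section
/- There exists a group G which is both locally finite and nilpotent such that for every field F there exist an F-linear ring endomorphism σ of the group algebra FG fixing the center Z(FG) pointwise and an F-linear (σ, id)-derivation δ of FG which is not (σ, id)-inner: there is no x ∈ FG with δ(a) = xa − σ(a)x for all a ∈ FG. Concretely, one may take G to be the restricted direct product (direct sum) of countably many copies of a finite non-abelian nilpotent group H, σ the identity, and δ(α) = Σ_i (x_iα − αx_i), where x_i is a fixed non-central element of the i-th copy of H (the sum is finite on each element of FG). -/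
universe u

/-!
Take for `G` the restricted direct product of countably many copies of the dihedral group of
order 8, and let `x i ∈ F[G]` be a fixed non-central element `h` of the `i`-th factor. An element
of `F[G]` only involves finitely many factors, so it commutes with all but finitely many `x i`;
hence `δ a = ∑ᶠ i, ⁅x i, a⁆` is a finite sum of inner derivations on each `a`, and so a
derivation. It is not inner: a candidate `y` involves only finitely many factors, so if `b` is an
element not commuting with `h` placed in a factor `n` not involved in `y`, then `⁅y, b⁆ = 0`
while `δ b = ⁅x n, b⁆ ≠ 0`.
-/

open Function

section SumOfCommutators

attribute [local instance] LieRing.ofAssociativeRing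

variable {R ι : Type*} [Ring R]

theorem Ring.lie_mul (x a b : R) : ⁅x, a * b⁆ = ⁅x, a⁆ * b + a * ⁅x, b⁆ := by
  simp only [Ring.lie_def]
  noncomm_ring

noncomputable def sumOfCommutators (k : Type*) [CommRing k] [Algebra k R] (x : ι → R)
    (hx : ∀ a : R, HasFiniteSupport fun i ↦ ⁅x i, a⁆) : R →ₗ[k] R where
  toFun a := ∑ᶠ i, ⁅x i, a⁆
  map_add' a b := by simp only [lie_add]; exact finsum_add_distrib (hx a) (hx b)
  map_smul' c a := by simp only [lie_smul]; exact (smul_finsum' c (hx a)).symm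

variable {k : Type*} [CommRing k] [Algebra k R] {x : ι → R}
  {hx : ∀ a : R, HasFiniteSupport fun i ↦ ⁅x i, a⁆}

theorem sumOfCommutators_apply (a : R) : sumOfCommutators k x hx a = ∑ᶠ i, ⁅x i, a⁆ := rfl

theorem sumOfCommutators_mul (a b : R) :
    sumOfCommutators k x hx (a * b) =
      sumOfCommutators k x hx a * b + a * sumOfCommutators k x hx b := by
  simp only [sumOfCommutators_apply, Ring.lie_mul, finsum_mul' _ _ (hx a), mul_finsum' _ _ (hx b)]
  exact finsum_add_distrib ((hx a).mul_left fun _ ↦ b) (.mul_right (fun _ ↦ a) (hx b))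

theorem sumOfCommutators_apply_of_commute {n : ι} {b : R} (hb : ∀ i ≠ n, Commute (x i) b) :
    sumOfCommutators k x hx b = ⁅x n, b⁆ :=
  finsum_eq_single _ n fun i hi ↦ (hb i hi).lie_eq

theorem not_exists_sumOfCommutators_eq_lie
    (hsep : ∀ y : R, ∃ n b, Commute y b ∧ (∀ i ≠ n, Commute (x i) b) ∧ ¬Commute (x n) b) :
    ¬∃ y : R, ∀ a, sumOfCommutators k x hx a = ⁅y, a⁆ := by
  rintro ⟨y, hy⟩
  obtain ⟨n, b, hyb, hb, hnb⟩ := hsep y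
  have hδb := hy b
  rw [sumOfCommutators_apply_of_commute hb, hyb.lie_eq] at hδb
  exact hnb (commute_iff_lie_eq.mpr hδb)

end SumOfCommutators

theorem MonoidAlgebra.of_commute_of_forall_commute {k G : Type*} [Semiring k] [Monoid G]
    {g : G} {a : MonoidAlgebra k G} (h : ∀ g' ∈ a.coeff.support, Commute g g') :
    Commute (of k G g) a := by
  rw [← sum_coeff_single a]
  exact Commute.sum_right _ _ _ fun g' hg' ↦ single_commute_single (h g' hg') (Commute.one_left _)

theorem DihedralGroup.isPGroup_two_pow (n : ℕ) : IsPGroup 2 (DihedralGroup (2 ^ n)) :=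
  IsPGroup.of_card (n := n + 1) <| by rw [DihedralGroup.nat_card, pow_succ']

def restrictedPi (ι H : Type*) [Group H] : Subgroup (ι → H) where
  carrier := {f | HasFiniteMulSupport f}
  one_mem' := hasFiniteMulSupport_fun_one
  mul_mem' := HasFiniteMulSupport.mul
  inv_mem' := HasFiniteMulSupport.inv

namespace restrictedPi

variable {ι H : Type*} [Group H]

instance [Group.IsNilpotent H] : Group.IsNilpotent (restrictedPi ι H) :=
  have := Group.isNilpotent_pi_of_bounded_class (Gs := fun _ : ι ↦ H) _ fun _ ↦ le_rfl
  inferInstance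

theorem mulSupport_subset_of_mem_closure {T : Set (restrictedPi ι H)} {g : restrictedPi ι H}
    (hg : g ∈ Subgroup.closure T) : mulSupport (g : ι → H) ⊆ ⋃ t ∈ T, mulSupport (t : ι → H) := by
  induction hg using Subgroup.closure_induction with
  | mem t ht =>
    exact Set.subset_biUnion_of_mem (u := fun t : restrictedPi ι H ↦ mulSupport (t : ι → H)) ht
  | one => simp
  | mul g g' _ _ hg hg' => exact (mulSupport_mul _ _).trans (Set.union_subset hg hg')
  | inv g _ hg => simpa [mulSupport_inv] using hg

theorem finite_of_fg [Finite H] (K : Subgroup (restrictedPi ι H)) (hK : K.FG) : Finite K := by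
  obtain ⟨T, rfl⟩ := hK
  set S := ⋃ t ∈ (T : Set (restrictedPi ι H)), mulSupport (t : ι → H)
  have : Finite S := (T.finite_toSet.biUnion fun t _ ↦ t.2).to_subtype
  refine Finite.of_injective (fun (g : Subgroup.closure (T : Set (restrictedPi ι H))) (s : S) ↦
    (g : ι → H) s) fun g g' hgg' ↦ ?_
  ext i
  by_cases hi : i ∈ S
  · exact congrFun hgg' ⟨i, hi⟩
  · rw [notMem_mulSupport.mp fun h ↦ hi (mulSupport_subset_of_mem_closure g.2 h),
      notMem_mulSupport.mp fun h ↦ hi (mulSupport_subset_of_mem_closure g'.2 h)]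

section MulSingle

variable [DecidableEq ι]

def mulSingle (i : ι) : H →* restrictedPi ι H :=
  (MonoidHom.mulSingle (fun _ ↦ H) i).codRestrict _ fun _ ↦
    (Set.finite_singleton i).subset Pi.mulSupport_mulSingle_subset

@[simp]
theorem coe_mulSingle (i : ι) (h : H) : (mulSingle i h : ι → H) = Pi.mulSingle i h := rfl

theorem mulSingle_injective (i : ι) : Injective (mulSingle (H := H) i) :=
  fun _ _ h ↦ Pi.mulSingle_injective i (congrArg Subtype.val h)

theorem commute_mulSingle {g : restrictedPi ι H} {i : ι} (hi : (g : ι → H) i = 1) (h : H) :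
    Commute (mulSingle i h) g := by
  ext j
  by_cases hj : j = i
  · subst hj; simp [hi]
  · simp [Pi.mulSingle_eq_of_ne hj]

end MulSingle

open MonoidAlgebra

variable (k : Type*) [CommRing k]

def supportIndices (a : MonoidAlgebra k (restrictedPi ι H)) : Set ι :=
  ⋃ g ∈ a.coeff.support, mulSupport (g : ι → H)

theorem finite_supportIndices (a : MonoidAlgebra k (restrictedPi ι H)) :
    (supportIndices k a).Finite :=
  a.coeff.support.finite_toSet.biUnion fun g _ ↦ g.2

variable [DecidableEq ι]

theorem commute_of_notMem_supportIndices {a : MonoidAlgebra k (restrictedPi ι H)} {i : ι}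
    (hi : i ∉ supportIndices k a) (h : H) : Commute (of k _ (mulSingle i h)) a :=
  of_commute_of_forall_commute fun _ hg ↦
    commute_mulSingle (notMem_mulSupport.mp fun hgi ↦ hi (Set.mem_biUnion hg hgi)) h

theorem hasFiniteSupport_lie_mulSingle (h : H) (a : MonoidAlgebra k (restrictedPi ι H)) :
    HasFiniteSupport fun i : ι ↦ ⁅of k _ (mulSingle i h), a⁆ :=
  (finite_supportIndices k a).subset fun _ hi ↦
    by_contra fun hi' ↦ hi (commute_of_notMem_supportIndices k hi' h).lie_eq

theorem not_exists_sumOfCommutators_mulSingle_eq_lie [Infinite ι] [Nontrivial k] {h h' : H}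
    (hh : ¬Commute h h') :
    ¬∃ y : MonoidAlgebra k (restrictedPi ι H), ∀ a, sumOfCommutators k
      (fun i : ι ↦ of k _ (mulSingle i h)) (hasFiniteSupport_lie_mulSingle k h) a = ⁅y, a⁆ := by
  refine not_exists_sumOfCommutators_eq_lie fun y ↦ ?_
  obtain ⟨n, hn⟩ := (finite_supportIndices k y).exists_notMem
  refine ⟨n, of k _ (mulSingle n h'), (commute_of_notMem_supportIndices k hn h').symm,
    fun i hi ↦ (commute_mulSingle (by simp [hi]) h).map (of k _), fun hc ↦ hh ?_⟩
  exact mulSingle_injective n <| of_injective (R := k) <| by simpa only [map_mul] using hc.eq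

end restrictedPi

open restrictedPi in
/-- There is a group `G`, both locally finite and nilpotent, such that for every
field `F` there are an `F`-linear ring endomorphism `σ` of the group algebra `F[G]` fixing the
center of `F[G]` pointwise and an `F`-linear `(σ, id)`-derivation `δ` of `F[G]` which is not
`(σ, id)`-inner. -/
theorem exists_non_inner_twisted_derivation :
    ∃ (G : Type) (_ : Group G),
      (∀ H : Subgroup G, H.FG → Finite H) ∧
      Group.IsNilpotent G ∧
      ∀ (F : Type u) [Field F],
        ∃ σ : MonoidAlgebra F G →ₐ[F] MonoidAlgebra F G,
          (∀ x ∈ Subring.center (MonoidAlgebra F G), σ x = x) ∧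
          ∃ δ : MonoidAlgebra F G →ₗ[F] MonoidAlgebra F G,
            (∀ a b : MonoidAlgebra F G, δ (a * b) = δ a * b + σ a * δ b) ∧
            ¬ ∃ x : MonoidAlgebra F G, ∀ a : MonoidAlgebra F G, δ a = x * a - σ a * x := by
  have : Group.IsNilpotent (DihedralGroup (2 ^ 2)) :=
    (DihedralGroup.isPGroup_two_pow 2).isNilpotent
  have hh : ¬Commute (DihedralGroup.r 1 : DihedralGroup (2 ^ 2)) (DihedralGroup.sr 0) :=
    fun hc ↦ absurd hc.eq (by decide)
  refine ⟨restrictedPi ℕ (DihedralGroup (2 ^ 2)), inferInstance, finite_of_fg, inferInstance,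
    fun F _ ↦ ⟨AlgHom.id F _, fun _ _ ↦ rfl, ?_⟩⟩
  exact ⟨sumOfCommutators F _ (hasFiniteSupport_lie_mulSingle F (DihedralGroup.r 1)),
    sumOfCommutators_mul, not_exists_sumOfCommutators_mulSingle_eq_lie F hh⟩
end
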